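/- arXiv:1806.01889 — 6 statements merged into one kernel-verified Lean document; each statement's English description precedes it below -/
import Mathlib

section
/- Let F and E be locally convex Hausdorff spaces, (fₙ) an equicontinuous Schauder basis of F with coefficient functionals (λₙ), Qₙ(f) = λₙ(f)fₙ, and P_k = (Σ_{n=1}^{k} Qₙ) ε id_E the induced operators on the ε-product F ε E = L_e(F'_κ, E). Then for every u ∈ F ε E, the sequence (P_k(u)) converges to u in F ε E; consequently every u ∈ F ε E satisfies u(f') = Σ_{n=1}^{∞} u(λₙ) f'(fₙ) for all f' ∈ F'. -/
/-!
Put `T k = ∑_{n<k} λₙ ⊗ fₙ ∈ L(F, F)`; by linearity of `u`, the `k`-th partial sum at `f'` is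
`u (f' ∘ T k)`. The operators `T k` are equicontinuous and converge pointwise to the identity,
hence uniformly on compact sets. Together with equicontinuity of `S` at `0` this gives
`f' ∘ T k → f'` in `F'_κ`, uniformly in `f' ∈ S`, and the uniformly continuous `u` carries this
uniform convergence over to `E`.
-/

open Filter Topology

/-- The collection of absolutely convex compact subsets of `F`. -/
def kappaSets (𝕜 F : Type*) [RCLike 𝕜] [AddCommGroup F] [Module 𝕜 F] [Module ℝ F]
    [UniformSpace F] : Set (Set F) :=
  {s : Set F | IsCompact s ∧ Balanced 𝕜 s ∧ Convex ℝ s}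

/-- `F'_κ`: the dual of `F` with the topology of uniform convergence on absolutely convex
compact subsets of `F`. -/
abbrev DualKappa (𝕜 F : Type*) [RCLike 𝕜] [AddCommGroup F] [Module 𝕜 F] [Module ℝ F]
    [UniformSpace F] [IsUniformAddGroup F] [ContinuousSMul 𝕜 F] :=
  UniformConvergenceCLM (RingHom.id 𝕜) 𝕜 (kappaSets 𝕜 F)

open scoped UniformConvergenceCLM

theorem Equicontinuous.tendstoUniformlyOn_of_tendsto {ι X α : Type*} [TopologicalSpace X]
    [UniformSpace α] {F : ι → X → α} {f : X → α} {p : Filter ι} (hF : Equicontinuous F)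
    (h : Tendsto F p (𝓝 f)) {K : Set X} (hK : IsCompact K) : TendstoUniformlyOn F f p K :=
  have hcompact : Tendsto (UniformOnFun.ofFun {K : Set X | IsCompact K} ∘ F) p
      (𝓝 (UniformOnFun.ofFun _ f)) :=
    (EquicontinuousOn.tendsto_uniformOnFun_iff_pi (fun _ hK ↦ hK)
      (Set.sUnion_eq_univ_iff.mpr fun x ↦ ⟨{x}, isCompact_singleton, rfl⟩)
      (fun K _ ↦ hF.equicontinuousOn K) p f).mpr h
  UniformOnFun.tendsto_iff_tendstoUniformlyOn.mp hcompact K hK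

theorem tendstoUniformlyOn_iff_tendsto_sub {ι α G : Type*} [AddGroup G] [UniformSpace G]
    [IsUniformAddGroup G] {F : ι → α → G} {f : α → G} {p : Filter ι} {s : Set α} :
    TendstoUniformlyOn F f p s ↔
      Tendsto (fun q : ι × α ↦ F q.1 q.2 - f q.2) (p ×ˢ 𝓟 s) (𝓝 0) := by
  rw [IsTopologicalAddGroup.tendstoUniformlyOn_iff F f p s
    IsUniformAddGroup.rightUniformSpace_eq, tendsto_iff_forall_eventually_mem]
  exact forall₂_congr fun _ _ ↦ by rw [eventually_prod_principal_iff]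

theorem UniformConvergenceCLM.tendstoUniformlyOn_comp {𝕜 F G ι : Type*} [NormedField 𝕜]
    [AddCommGroup F] [Module 𝕜 F] [UniformSpace F] [IsUniformAddGroup F]
    [AddCommGroup G] [Module 𝕜 G] [UniformSpace G] [IsUniformAddGroup G]
    {𝔖 : Set (Set F)} {S : Set (F →L[𝕜] G)} (hS : Equicontinuous fun φ : S ↦ (φ : F → G))
    {T : ι → F →L[𝕜] F} {p : Filter ι}
    (hT : ∀ s ∈ 𝔖, TendstoUniformlyOn (fun i ↦ ⇑(T i)) id p s) :
    TendstoUniformlyOn (fun i φ ↦ ofFun (RingHom.id 𝕜) G 𝔖 (φ.comp (T i)))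
      (ofFun (RingHom.id 𝕜) G 𝔖) p S := by
  rw [tendstoUniformlyOn_iff_tendsto_sub, nhds_zero_eq]
  simp only [tendsto_iInf, tendsto_principal]
  intro s hs t ht
  have hSt : ∀ᶠ y in 𝓝 (0 : F), ∀ φ : S, φ.1 y ∈ t := by
    filter_upwards [hS 0 _ (uniformity_eq_comap_nhds_zero G ▸ preimage_mem_comap ht)]
      with y hy φ
    simpa using hy φ
  have hTs : ∀ᶠ i in p, ∀ x ∈ s, ∀ φ : S, φ.1 (T i x - x) ∈ t :=
    (IsTopologicalAddGroup.tendstoUniformlyOn_iff _ _ _ _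
      IsUniformAddGroup.rightUniformSpace_eq).mp (hT s hs) _ hSt
  rw [eventually_prod_principal_iff]
  filter_upwards [hTs] with i hi φ hφ x hx
  have h := hi x hx ⟨φ, hφ⟩
  rw [map_sub] at h
  exact h

theorem ContinuousLinearMap.comp_sum_smulRight {𝕜 F ι : Type*} [NormedField 𝕜]
    [AddCommGroup F] [Module 𝕜 F] [TopologicalSpace F] [ContinuousAdd F] [ContinuousSMul 𝕜 F]
    (φ : F →L[𝕜] 𝕜) (g : ι → F →L[𝕜] 𝕜) (v : ι → F) (s : Finset ι) :
    φ.comp (∑ n ∈ s, (g n).smulRight (v n)) = ∑ n ∈ s, φ (v n) • g n := by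
  ext x
  simp [mul_comm]

theorem stmt2_general {𝕜 F E : Type*} [RCLike 𝕜]
    [AddCommGroup F] [Module 𝕜 F] [UniformSpace F] [IsUniformAddGroup F]
    [ContinuousSMul 𝕜 F] [Module ℝ F]
    [AddCommGroup E] [Module 𝕜 E] [UniformSpace E] [IsUniformAddGroup E]
    (f : ℕ → F) (lam : ℕ → F →L[𝕜] 𝕜)
    -- `(fₙ)` is a Schauder basis with coefficient functionals `(λₙ)`:
    (hrepr : ∀ x : F,
      Tendsto (fun k => ∑ n ∈ Finset.range k, lam n x • f n) atTop (𝓝 x))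
    -- the basis is equicontinuous (the expansion operators form an equicontinuous family):
    (hequi : Equicontinuous
      (fun k : ℕ => fun x : F => ∑ n ∈ Finset.range k, lam n x • f n))
    -- `u ∈ F ε E = L(F'_κ, E)`:
    (u : DualKappa 𝕜 F →L[𝕜] E) :
    (∀ S : Set (F →L[𝕜] 𝕜), Equicontinuous (fun φ : S => (φ.1 : F → 𝕜)) →
      TendstoUniformlyOn
        (fun k (f' : F →L[𝕜] 𝕜) => ∑ n ∈ Finset.range k, f' (f n) • u (lam n))
        (fun f' : F →L[𝕜] 𝕜 => u f') atTop S) ∧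
    (∀ f' : F →L[𝕜] 𝕜,
      Tendsto (fun k => ∑ n ∈ Finset.range k, f' (f n) • u (lam n)) atTop (𝓝 (u f'))) := by
  set T : ℕ → F →L[𝕜] F := fun k ↦ ∑ n ∈ Finset.range k, (lam n).smulRight (f n)
  have hT_apply : ∀ k, ⇑(T k) = fun x ↦ ∑ n ∈ Finset.range k, lam n x • f n := fun k ↦ by
    ext x
    simp [T]
  have hT_compact : ∀ K ∈ kappaSets 𝕜 F, TendstoUniformlyOn (fun k ↦ ⇑(T k)) id atTop K := by
    refine fun K hK ↦ Equicontinuous.tendstoUniformlyOn_of_tendsto ?_ ?_ hK.1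
    · simpa only [hT_apply] using hequi
    · simpa only [hT_apply, tendsto_pi_nhds, id] using hrepr
  have hsum : ∀ k (f' : F →L[𝕜] 𝕜),
      ∑ n ∈ Finset.range k, f' (f n) • u (lam n) = u (f'.comp (T k)) := fun k f' ↦ by
    rw [ContinuousLinearMap.comp_sum_smulRight]
    exact (Finset.sum_congr rfl fun n _ ↦ map_smul u _ _).symm.trans (map_sum u _ _).symm
  have huniform (S : Set (F →L[𝕜] 𝕜)) (hS : Equicontinuous fun φ : S ↦ (φ : F → 𝕜)) :=
    u.uniformContinuous.comp_tendstoUniformlyOn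
      (UniformConvergenceCLM.tendstoUniformlyOn_comp hS hT_compact)
  simp only [hsum]
  exact ⟨huniform, fun f' ↦
    (huniform {f'} (equicontinuous_unique.mpr f'.continuous)).tendsto_at rfl⟩

/-- Let `(fₙ)` be an equicontinuous Schauder basis of `F` with coefficient
functionals `(λₙ)`, and `P_k = (Σ_{n<k} Qₙ) ε id_E` on the ε-product `F ε E = L(F'_κ, E)`,
so that `P_k(u)(f') = Σ_{n<k} f'(fₙ) • u(λₙ)`.  Then `P_k(u) → u` in `F ε E`, i.e. uniformly
on every equicontinuous subset of `F'`; consequently `u(f') = Σₙ f'(fₙ) • u(λₙ)` for every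
`f' ∈ F'`. -/
theorem stmt2 {𝕜 F E : Type*} [RCLike 𝕜]
    [AddCommGroup F] [Module 𝕜 F] [UniformSpace F] [IsUniformAddGroup F]
    [ContinuousSMul 𝕜 F] [T2Space F] [Module ℝ F] [IsScalarTower ℝ 𝕜 F]
    [LocallyConvexSpace ℝ F]
    [AddCommGroup E] [Module 𝕜 E] [UniformSpace E] [IsUniformAddGroup E]
    [ContinuousSMul 𝕜 E] [T2Space E] [Module ℝ E] [IsScalarTower ℝ 𝕜 E]
    [LocallyConvexSpace ℝ E]
    (f : ℕ → F) (lam : ℕ → F →L[𝕜] 𝕜)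
    -- `(fₙ)` is a Schauder basis with coefficient functionals `(λₙ)`:
    (hrepr : ∀ x : F,
      Tendsto (fun k => ∑ n ∈ Finset.range k, lam n x • f n) atTop (𝓝 x))
    (huniq : ∀ (x : F) (c : ℕ → 𝕜),
      Tendsto (fun k => ∑ n ∈ Finset.range k, c n • f n) atTop (𝓝 x) →
        c = fun n => lam n x)
    -- the basis is equicontinuous (the expansion operators form an equicontinuous family):
    (hequi : Equicontinuous
      (fun k : ℕ => fun x : F => ∑ n ∈ Finset.range k, lam n x • f n))
    -- `u ∈ F ε E = L(F'_κ, E)`: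
    (u : DualKappa 𝕜 F →L[𝕜] E) :
    (∀ S : Set (F →L[𝕜] 𝕜), Equicontinuous (fun φ : S => (φ.1 : F → 𝕜)) →
      TendstoUniformlyOn
        (fun k (f' : F →L[𝕜] 𝕜) => ∑ n ∈ Finset.range k, f' (f n) • u (lam n))
        (fun f' : F →L[𝕜] 𝕜 => u f') atTop S) ∧
    (∀ f' : F →L[𝕜] 𝕜,
      Tendsto (fun k => ∑ n ∈ Finset.range k, f' (f n) • u (lam n)) atTop (𝓝 (u f'))) :=
  stmt2_general f lam hrepr hequi u
end

section
/- Let F and E be complete locally convex Hausdorff spaces and suppose F has an equicontinuous Schauder basis. Then the completed injective tensor product F ⊗̂_ε E is (isomorphic to) the ε-product F ε E, and hence every element of F ⊗̂_ε E has a series representation u = Σₙ u(λₙ) ⊗ fₙ in the sense that u(f') = Σₙ u(λₙ) f'(fₙ). -/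
/-!
The partial-sum operators `Pₖ x = ∑_{n<k} λₙ(x) fₙ` are equicontinuous and converge pointwise
to the identity, hence uniformly on compact sets. Their transposes `Pₖ'` on `F'_κ` therefore
converge to the identity uniformly on equicontinuous sets, i.e. `u ∘ Pₖ' → u` in `F ε E` for
every `u`. Since `u (Pₖ' f') = ∑_{n<k} f'(fₙ) u(λₙ)`, the `u ∘ Pₖ'` are finite-rank operators
and evaluating at `f'` gives the series representation.
-/

open Filter Topology

/-- Schwartz' ε-product `F ε E = L_e(F'_κ, E)`: continuous linear operators from `F'_κ` to `E`
with the topology of uniform convergence on the equicontinuous subsets of `F'`. -/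
abbrev EpsilonProduct (𝕜 F E : Type*) [RCLike 𝕜]
    [AddCommGroup F] [Module 𝕜 F] [UniformSpace F] [IsUniformAddGroup F]
    [ContinuousSMul 𝕜 F] [Module ℝ F]
    [AddCommGroup E] [Module 𝕜 E] [UniformSpace E] [IsUniformAddGroup E]
    [ContinuousSMul 𝕜 E] :=
  UniformConvergenceCLM (RingHom.id 𝕜) E
    {S : Set (DualKappa 𝕜 F) | Equicontinuous (fun φ : S => (φ.1 : F → 𝕜))}

open Set

theorem UniformConvergenceCLM.tendstoUniformly_iff {𝕜₁ 𝕜₂ : Type*} [NormedField 𝕜₁]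
    [NormedField 𝕜₂] {σ : 𝕜₁ →+* 𝕜₂} {E F : Type*} [AddCommGroup E] [Module 𝕜₁ E]
    [TopologicalSpace E] [AddCommGroup F] [Module 𝕜₂ F] [UniformSpace F] [IsUniformAddGroup F]
    {𝔖 : Set (Set E)} {ι X : Type*} {G : ι → X → UniformConvergenceCLM σ F 𝔖}
    {g : X → UniformConvergenceCLM σ F 𝔖} {l : Filter ι} :
    TendstoUniformly G g l ↔ ∀ s ∈ 𝔖,
      TendstoUniformlyOn (fun i (p : X × E) => G i p.1 p.2) (fun p => g p.1 p.2) l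
        (univ ×ˢ s) := by
  rw [tendstoUniformly_iff_tendsto,
    ← (UniformConvergenceCLM.isUniformInducing_coeFn σ F 𝔖).comap_uniformity,
    tendsto_comap_iff, UniformOnFun.uniformity_eq]
  simp only [tendsto_iInf, tendsto_principal, TendstoUniformlyOn, ← principal_univ,
    eventually_prod_principal_iff]
  simp [UniformOnFun.gen]

theorem UniformEquicontinuous.tendstoUniformlyOn_comp {ι X α β γ : Type*} [UniformSpace β]
    [UniformSpace γ] {Φ : X → β → γ} (hΦ : UniformEquicontinuous Φ) {G : ι → α → β}
    {g : α → β} {l : Filter ι} {s : Set α} (h : TendstoUniformlyOn G g l s) :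
    TendstoUniformlyOn (fun i (p : X × α) => Φ p.1 (G i p.2)) (fun p => Φ p.1 (g p.2)) l
      (univ ×ˢ s) := by
  intro U hU
  filter_upwards [h _ (hΦ U hU)] with i hi
  exact fun p hp => hi p.2 hp.2 p.1

theorem Equicontinuous.tendstoUniformlyOn_of_tendsto_s4 {ι X α : Type*} [TopologicalSpace X]
    [UniformSpace α] {G : ι → X → α} {g : X → α} {l : Filter ι} (hG : Equicontinuous G)
    (hpt : ∀ x, Tendsto (G · x) l (𝓝 (g x))) {S : Set X} (hS : IsCompact S) :
    TendstoUniformlyOn G g l S := by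
  have hlim := (EquicontinuousOn.tendsto_uniformOnFun_iff_pi' (𝔖 := {S}) (by simpa)
    (by simpa using hG.equicontinuousOn S) l g).mpr (tendsto_pi_nhds.mpr fun x => hpt x)
  exact UniformOnFun.tendsto_iff_tendstoUniformlyOn.mp hlim S rfl

section Kappa

variable {𝕜 F G : Type*} [RCLike 𝕜]
  [AddCommGroup F] [Module 𝕜 F] [Module ℝ F] [IsScalarTower ℝ 𝕜 F] [UniformSpace F]
  [AddCommGroup G] [Module 𝕜 G] [Module ℝ G] [IsScalarTower ℝ 𝕜 G] [UniformSpace G]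

theorem mapsTo_image_kappaSets (L : F →L[𝕜] G) :
    MapsTo (L '' ·) (kappaSets 𝕜 F) (kappaSets 𝕜 G) := by
  rintro S ⟨hc, hb, hv⟩
  refine ⟨hc.image L.continuous, ?_, hv.linear_image (L.toLinearMap.restrictScalars ℝ)⟩
  rintro a ha _ ⟨_, ⟨x, hx, rfl⟩, rfl⟩
  exact ⟨a • x, hb a ha ⟨x, hx, rfl⟩, map_smul L a x⟩

variable [IsUniformAddGroup F] [ContinuousSMul 𝕜 F] [IsUniformAddGroup G] [ContinuousSMul 𝕜 G]

noncomputable abbrev DualKappa.transpose (L : F →L[𝕜] G) : DualKappa 𝕜 G →L[𝕜] DualKappa 𝕜 F :=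
  ContinuousLinearMap.precompUniformConvergenceCLM 𝕜 _ _ L (mapsTo_image_kappaSets L)

theorem DualKappa.tendstoUniformlyOn_transpose {ι : Type*} {l : Filter ι} {P : ι → F →L[𝕜] F}
    (hP : ∀ S ∈ kappaSets 𝕜 F, TendstoUniformlyOn (fun i => ⇑(P i)) id l S)
    {H : Set (DualKappa 𝕜 F)} (hH : Equicontinuous fun φ : H => (φ.1 : F → 𝕜)) :
    TendstoUniformlyOn (fun i φ => transpose (P i) φ) id l H := by
  rw [tendstoUniformlyOn_iff_tendstoUniformly_comp_coe, UniformConvergenceCLM.tendstoUniformly_iff]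
  intro S hS
  exact (uniformEquicontinuous_of_equicontinuousAt_zero (fun φ : H => φ.1)
    (hH 0)).tendstoUniformlyOn_comp (hP S hS)

theorem DualKappa.tendsto_transpose {ι : Type*} {l : Filter ι} {P : ι → F →L[𝕜] F}
    (hP : ∀ S ∈ kappaSets 𝕜 F, TendstoUniformlyOn (fun i => ⇑(P i)) id l S)
    (φ : DualKappa 𝕜 F) : Tendsto (fun i => transpose (P i) φ) l (𝓝 φ) :=
  (UniformConvergenceCLM.tendsto_iff_tendstoUniformlyOn _ _ _).mpr fun S hS =>
    (ContinuousLinearMap.uniformContinuous φ).comp_tendstoUniformlyOn (hP S hS)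

theorem EpsilonProduct.tendsto_comp_transpose {E : Type*} [AddCommGroup E] [Module 𝕜 E]
    [UniformSpace E] [IsUniformAddGroup E] [ContinuousSMul 𝕜 E] {ι : Type*} {l : Filter ι}
    {P : ι → F →L[𝕜] F} (hP : ∀ S ∈ kappaSets 𝕜 F, TendstoUniformlyOn (fun i => ⇑(P i)) id l S)
    (u : EpsilonProduct 𝕜 F E) :
    Tendsto (β := EpsilonProduct 𝕜 F E)
      (fun i => ContinuousLinearMap.comp u (DualKappa.transpose (P i))) l (𝓝 u) := by
  refine (UniformConvergenceCLM.tendsto_iff_tendstoUniformlyOn _ _ _).mpr fun H hH => ?_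
  exact (ContinuousLinearMap.uniformContinuous u).comp_tendstoUniformlyOn
    (DualKappa.tendstoUniformlyOn_transpose hP hH)

end Kappa

section SchauderBasis

variable {𝕜 F : Type*} [RCLike 𝕜] [AddCommGroup F] [Module 𝕜 F] [TopologicalSpace F]
  [ContinuousAdd F] [ContinuousSMul 𝕜 F]

noncomputable def partialSumCLM (f : ℕ → F) (lam : ℕ → F →L[𝕜] 𝕜) (k : ℕ) : F →L[𝕜] F :=
  ∑ n ∈ Finset.range k, (lam n).smulRight (f n)

theorem partialSumCLM_apply (f : ℕ → F) (lam : ℕ → F →L[𝕜] 𝕜) (k : ℕ) (x : F) :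
    partialSumCLM f lam k x = ∑ n ∈ Finset.range k, lam n x • f n := by
  simp [partialSumCLM]

end SchauderBasis

theorem DualKappa.apply_transpose_partialSumCLM {𝕜 F E : Type*} [RCLike 𝕜] [AddCommGroup F]
    [Module 𝕜 F] [Module ℝ F] [IsScalarTower ℝ 𝕜 F] [UniformSpace F] [IsUniformAddGroup F]
    [ContinuousSMul 𝕜 F] [AddCommGroup E] [Module 𝕜 E] [TopologicalSpace E]
    (u : DualKappa 𝕜 F →L[𝕜] E) (f : ℕ → F) (lam : ℕ → F →L[𝕜] 𝕜) (k : ℕ) (φ : F →L[𝕜] 𝕜) :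
    u (transpose (partialSumCLM f lam k) φ) = ∑ n ∈ Finset.range k, φ (f n) • u (lam n) := by
  -- `ofFun` makes the sum a sum in `F'_κ`, where `u` is additive.
  have h : transpose (partialSumCLM f lam k) φ = ∑ n ∈ Finset.range k,
      φ (f n) • UniformConvergenceCLM.ofFun (σ := RingHom.id 𝕜) (F := 𝕜) _ (lam n) := by
    ext x
    change φ (partialSumCLM f lam k x) = (∑ n ∈ Finset.range k, φ (f n) • lam n : F →L[𝕜] 𝕜) x
    simp [partialSumCLM_apply, mul_comm]
  simp only [h, map_sum, map_smul]
  rfl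

theorem stmt4_general {𝕜 F E : Type*} [RCLike 𝕜]
    [AddCommGroup F] [Module 𝕜 F] [UniformSpace F] [IsUniformAddGroup F]
    [ContinuousSMul 𝕜 F] [Module ℝ F] [IsScalarTower ℝ 𝕜 F]
    [AddCommGroup E] [Module 𝕜 E] [UniformSpace E] [IsUniformAddGroup E]
    [ContinuousSMul 𝕜 E]
    (f : ℕ → F) (lam : ℕ → F →L[𝕜] 𝕜)
    (hrepr : ∀ x : F,
      Tendsto (fun k => ∑ n ∈ Finset.range k, lam n x • f n) atTop (𝓝 x))
    (hequi : Equicontinuous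
      (fun k : ℕ => fun x : F => ∑ n ∈ Finset.range k, lam n x • f n)) :
    -- `F ⊗ E` (the finite-rank operators) is dense in `F ε E`, i.e. `F ⊗̂_ε E ≅ F ε E`:
    Dense {u : EpsilonProduct 𝕜 F E |
      ∃ (m : ℕ) (g : Fin m → F) (e : Fin m → E),
        ∀ f' : F →L[𝕜] 𝕜, u f' = ∑ i, f' (g i) • e i} ∧
    -- and every element of `F ⊗̂_ε E = F ε E` has a series representation:
    (∀ u : EpsilonProduct 𝕜 F E, ∀ f' : F →L[𝕜] 𝕜,
      Tendsto (fun k => ∑ n ∈ Finset.range k, f' (f n) • u (lam n)) atTop (𝓝 (u f'))) := by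
  have hP : ∀ S ∈ kappaSets 𝕜 F,
      TendstoUniformlyOn (fun k => ⇑(partialSumCLM f lam k)) id atTop S := fun S hS =>
    (hequi.tendstoUniformlyOn_of_tendsto_s4 hrepr hS.1).congr
      (Eventually.of_forall fun k x _ => (partialSumCLM_apply f lam k x).symm)
  refine ⟨fun u => ?_, fun u f' => ?_⟩
  · refine mem_closure_of_tendsto (EpsilonProduct.tendsto_comp_transpose hP u)
      (Eventually.of_forall fun k => ⟨k, fun i => f i, fun i => u (lam i), fun f' => ?_⟩)
    exact (DualKappa.apply_transpose_partialSumCLM u f lam k f').trans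
      (Fin.sum_univ_eq_sum_range (fun n => f' (f n) • u (lam n)) k).symm
  · exact (((map_continuous u).tendsto f').comp (DualKappa.tendsto_transpose hP f')).congr
      fun k => DualKappa.apply_transpose_partialSumCLM u f lam k f'

/-- If `F` and `E` are complete locally convex Hausdorff spaces and `F` has an
equicontinuous Schauder basis `(fₙ)` with coefficient functionals `(λₙ)`, then the completed
injective tensor product `F ⊗̂_ε E` — realized as the closure of the finite-rank operators
`F ⊗ E` inside the (complete) ε-product `F ε E` — is all of `F ε E`, and every
`u ∈ F ⊗̂_ε E = F ε E` has the series representation `u(f') = Σₙ f'(fₙ) • u(λₙ)`. -/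
theorem stmt4 {𝕜 F E : Type*} [RCLike 𝕜]
    [AddCommGroup F] [Module 𝕜 F] [UniformSpace F] [IsUniformAddGroup F]
    [ContinuousSMul 𝕜 F] [T2Space F] [Module ℝ F] [IsScalarTower ℝ 𝕜 F]
    [LocallyConvexSpace ℝ F] [CompleteSpace F]
    [AddCommGroup E] [Module 𝕜 E] [UniformSpace E] [IsUniformAddGroup E]
    [ContinuousSMul 𝕜 E] [T2Space E] [Module ℝ E] [IsScalarTower ℝ 𝕜 E]
    [LocallyConvexSpace ℝ E] [CompleteSpace E]
    (f : ℕ → F) (lam : ℕ → F →L[𝕜] 𝕜)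
    (hrepr : ∀ x : F,
      Tendsto (fun k => ∑ n ∈ Finset.range k, lam n x • f n) atTop (𝓝 x))
    (huniq : ∀ (x : F) (c : ℕ → 𝕜),
      Tendsto (fun k => ∑ n ∈ Finset.range k, c n • f n) atTop (𝓝 x) →
        c = fun n => lam n x)
    (hequi : Equicontinuous
      (fun k : ℕ => fun x : F => ∑ n ∈ Finset.range k, lam n x • f n)) :
    -- `F ⊗ E` (the finite-rank operators) is dense in `F ε E`, i.e. `F ⊗̂_ε E ≅ F ε E`:
    Dense {u : EpsilonProduct 𝕜 F E |
      ∃ (m : ℕ) (g : Fin m → F) (e : Fin m → E),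
        ∀ f' : F →L[𝕜] 𝕜, u f' = ∑ i, f' (g i) • e i} ∧
    -- and every element of `F ⊗̂_ε E = F ε E` has a series representation:
    (∀ u : EpsilonProduct 𝕜 F E, ∀ f' : F →L[𝕜] 𝕜,
      Tendsto (fun k => ∑ n ∈ Finset.range k, f' (f n) • u (lam n)) atTop (𝓝 (u f'))) :=
  stmt4_general f lam hrepr hequi
end

section
/- Let F(Ω) ⊆ K^Ω and F(Ω,E) ⊆ E^Ω be locally convex Hausdorff spaces with continuous point evaluations on F(Ω), such that S : F(Ω) ε E → F(Ω,E), S(u)(x) = u(δₓ), is an isomorphism into. Suppose there is a sequence (fₙ) in F(Ω) and for every f ∈ F(Ω,E) a sequence (λₙ^E(f)) in E with f = Σₙ λₙ^E(f) fₙ convergent in F(Ω,E). If F(Ω) and E are sequentially complete, then S is surjective, i.e., F(Ω,E) ≅ F(Ω) ε E. -/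
/-!
The partial sums `U k = ∑_{n<k} Θ(fₙ ⊗ λₙ)` are finite-rank elements of `F(Ω) ε E` with
`S (U k)` the partial sums of the series of `f`, so, `S` being an embedding, they form a Cauchy
sequence and it suffices to show that it converges in `F(Ω) ε E`.

Sequential completeness of `E` gives a pointwise limit `u` on `F(Ω)'_κ`, which is linear; the
point is its continuity. The transposes `w k : E' → F(Ω)`, `e' ↦ ∑_{n<k} e'(λₙ) fₙ`, are uniformly
Cauchy on the polar `V°` of every zero neighbourhood `V` of `E`, so by sequential completeness of
`F(Ω)` they converge uniformly on `V°` to a linear map `T`. Since `V°` is weak-* compact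
(Alaoglu–Bourbaki), `K = T(V°)` is an absolutely convex compact subset of `F(Ω)`, and the bipolar
theorem shows that `u` maps the polar of `K`, a zero neighbourhood of `F(Ω)'_κ`, into `V`.
-/

open Filter Topology

open Set Pointwise

section LocallyConvex

variable {𝕜 G : Type*} [RCLike 𝕜] [AddCommGroup G] [Module 𝕜 G] [TopologicalSpace G]
  [IsTopologicalAddGroup G] [ContinuousSMul 𝕜 G]

theorem equicontinuous_of_forall_norm_le_one {ι hom : Type*} [FunLike hom G 𝕜]
    [LinearMapClass hom 𝕜 G 𝕜] (φ : ι → hom) {U : Set G} (hU : U ∈ 𝓝 0)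
    (hφ : ∀ i, ∀ y ∈ U, ‖φ i y‖ ≤ 1) : Equicontinuous (DFunLike.coe ∘ φ) := by
  refine equicontinuous_of_equicontinuousAt_zero φ
    (Metric.equicontinuousAt_iff_right.2 fun ε hε => ?_)
  have hε2 : ((ε / 2 : ℝ) : 𝕜) ≠ 0 := RCLike.ofReal_ne_zero.2 (half_pos hε).ne'
  filter_upwards [(set_smul_mem_nhds_zero_iff hε2).2 hU] with _ ⟨y, hy, hxy⟩ i
  subst hxy
  calc dist (φ i 0) (φ i (((ε / 2 : ℝ) : 𝕜) • y)) = ε / 2 * ‖φ i y‖ := by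
        simp [dist_zero_left, abs_of_pos hε]
    _ ≤ ε / 2 * 1 := by gcongr; exact hφ i y hy
    _ < ε := by linarith

theorem WeakDual.isCompact_polar_of_mem_nhds {V : Set G} (hV : V ∈ 𝓝 0) :
    IsCompact (WeakDual.polar 𝕜 V) := by
  have hemb : IsEmbedding fun (e : WeakDual 𝕜 G) (x : G) => e x :=
    WeakBilin.isEmbedding (B := topDualPairing 𝕜 G) ContinuousLinearMap.coe_injective
  rw [hemb.isCompact_iff]
  set A : Set (G → 𝕜) := (fun (e : WeakDual 𝕜 G) (x : G) => e x) '' WeakDual.polar 𝕜 V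
  have hbound : ∀ y, ∃ r, ∀ g ∈ A, g y ∈ Metric.closedBall 0 r := by
    intro y
    obtain ⟨r, hr, hrV⟩ := ((absorbent_nhds_zero (𝕜 := 𝕜) hV) y).exists_pos
    obtain ⟨v, hv, rfl⟩ : y ∈ (r : 𝕜) • V := hrV (r : 𝕜) (by simp [abs_of_pos hr]) rfl
    refine ⟨r, ?_⟩
    rintro _ ⟨e, he, rfl⟩
    simpa [norm_smul, abs_of_pos hr] using mul_le_of_le_one_right hr.le (he v hv)
  choose r hr using hbound
  have hequi : Set.Equicontinuous A := by
    have := equicontinuous_of_forall_norm_le_one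
      (fun e : WeakDual.polar 𝕜 V => (e : WeakDual 𝕜 G)) hV fun e => e.2
    rw [Set.Equicontinuous, show A = _ from image_eq_range _ _]
    exact equicontinuous_iff_range.1 this
  have hclosed : IsClosed A := by
    refine isClosed_of_closure_subset fun g hg => ?_
    obtain ⟨L, rfl⟩ : g ∈ range ((↑) : (G →ₗ[𝕜] 𝕜) → G → 𝕜) :=
      (LinearMap.isClosed_range_coe G 𝕜 (RingHom.id 𝕜)).closure_subset <|
        closure_mono (by rintro _ ⟨e, -, rfl⟩; exact ⟨e.toLinearMap, rfl⟩) hg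
    have hLV : ⇑L ∈ {g : G → 𝕜 | ∀ v ∈ V, ‖g v‖ ≤ 1} := by
      refine (IsClosed.closure_subset_iff ?_).2 ?_ hg
      · simp only [ofPred_forall]
        exact isClosed_biInter fun v _ => isClosed_le (continuous_apply v).norm continuous_const
      · rintro _ ⟨e, he, rfl⟩
        exact he
    exact ⟨⟨L, hequi.closure.continuous_of_mem hg⟩, hLV, rfl⟩
  have hsub : A ⊆ univ.pi fun y => Metric.closedBall (0 : 𝕜) (r y) :=
    fun g hg => mem_univ_pi.2 fun y => hr y g hg
  exact (isCompact_univ_pi fun y => ProperSpace.isCompact_closedBall (0 : 𝕜) (r y))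
    |>.of_isClosed_subset hclosed hsub

end LocallyConvex

theorem Balanced.convexHull_real {𝕜 G : Type*} [RCLike 𝕜] [AddCommGroup G] [Module 𝕜 G]
    [Module ℝ G] [IsScalarTower ℝ 𝕜 G] {s : Set G} (hs : Balanced 𝕜 s) :
    Balanced 𝕜 (convexHull ℝ s) := by
  intro a ha
  have h := ((a • LinearMap.id : G →ₗ[𝕜] G).restrictScalars ℝ).image_convexHull s
  simp only [LinearMap.coe_restrictScalars, LinearMap.smul_apply, LinearMap.id_apply] at h
  rw [← image_smul, h, image_smul]
  exact convexHull_mono (hs a ha)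

section RealLocallyConvex

variable {𝕜 G : Type*} [RCLike 𝕜] [AddCommGroup G] [Module 𝕜 G] [TopologicalSpace G]
  [IsTopologicalAddGroup G] [ContinuousSMul 𝕜 G] [Module ℝ G] [IsScalarTower ℝ 𝕜 G]
  [LocallyConvexSpace ℝ G]

theorem exists_isClosed_balanced_convex_subset {W : Set G} (hW : W ∈ 𝓝 0) :
    ∃ V ∈ 𝓝 (0 : G), V ⊆ W ∧ IsClosed V ∧ Balanced 𝕜 V ∧ Convex ℝ V := by
  have : ContinuousSMul ℝ G := IsScalarTower.continuousSMul 𝕜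
  obtain ⟨C, ⟨hC, hCcl⟩, hCW⟩ := (closed_nhds_basis (0 : G)).mem_iff.1 hW
  obtain ⟨t, ⟨ht, htcx⟩, htC⟩ := (LocallyConvexSpace.convex_basis_zero ℝ G).mem_iff.1 hC
  have hs : convexHull ℝ (balancedCore 𝕜 t) ⊆ C :=
    (convexHull_min (balancedCore_subset t) htcx).trans htC
  refine ⟨closure (convexHull ℝ (balancedCore 𝕜 t)), ?_, (closure_minimal hs hCcl).trans hCW,
    isClosed_closure, (balancedCore_balanced t).convexHull_real.closure,
    (convex_convexHull ℝ _).closure⟩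
  exact mem_of_superset (balancedCore_mem_nhds_zero ht)
    ((subset_convexHull ℝ _).trans subset_closure)

theorem mem_of_forall_polar_norm_le_one {V : Set G} (hVcl : IsClosed V) (hVbal : Balanced 𝕜 V)
    (hVcx : Convex ℝ V) (hV0 : (0 : G) ∈ V) {z : G}
    (hz : ∀ e : G →L[𝕜] 𝕜, (∀ v ∈ V, ‖e v‖ ≤ 1) → ‖e z‖ ≤ 1) : z ∈ V := by
  by_contra hzV
  obtain ⟨e, u, hVu, huz⟩ := RCLike.geometric_hahn_banach_closed_point (𝕜 := 𝕜) hVcx hVcl hzV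
  have hu : 0 < u := by simpa using hVu 0 hV0
  -- rotating `v` inside the balanced set `V` turns the bound on `re (e v)` into one on `‖e v‖`
  have hnorm : ∀ v ∈ V, ‖e v‖ ≤ u := by
    intro v hv
    rcases eq_or_ne (e v) 0 with h | h
    · simpa [h] using hu.le
    · have hc : ‖(‖e v‖ : 𝕜) / e v‖ ≤ 1 := by simp [h]
      have := hVu _ (balanced_iff_smul_mem.1 hVbal hc hv)
      rw [map_smul, smul_eq_mul, div_mul_cancel₀ _ h, RCLike.ofReal_re] at this
      exact this.le
  have := hz ((u⁻¹ : 𝕜) • e) fun v hv => by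
    simpa [norm_smul, abs_of_pos hu, inv_mul_le_iff₀ hu] using hnorm v hv
  simp only [FunLike.coe_smul, Pi.smul_apply, smul_eq_mul, norm_mul, norm_inv,
    RCLike.norm_ofReal, abs_of_pos hu, inv_mul_le_iff₀ hu, mul_one] at this
  exact ((RCLike.re_le_norm (e z)).trans this).not_gt huz

end RealLocallyConvex

theorem uniformCauchySeqOn_iff_sub {ι α G : Type*} [AddGroup G] [UniformSpace G]
    [IsUniformAddGroup G] {u : ι → α → G} {p : Filter ι} {s : Set α} :
    UniformCauchySeqOn u p s ↔
      ∀ W ∈ 𝓝 (0 : G), ∀ᶠ m in p ×ˢ p, ∀ x ∈ s, u m.2 x - u m.1 x ∈ W := by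
  simp only [UniformCauchySeqOn, uniformity_eq_comap_nhds_zero G]
  refine ⟨fun h W hW => h _ (preimage_mem_comap hW), fun h V hV => ?_⟩
  obtain ⟨W, hW, hWV⟩ := mem_comap.1 hV
  filter_upwards [h W hW] with m hm x hx using hWV (hm x hx)

theorem UniformConvergenceCLM.uniformCauchySeqOn_of_cauchySeq {𝕜₁ 𝕜₂ : Type*} [NormedField 𝕜₁]
    [NormedField 𝕜₂] {σ : 𝕜₁ →+* 𝕜₂} {E F : Type*} [AddCommGroup E] [Module 𝕜₁ E]
    [TopologicalSpace E] [AddCommGroup F] [Module 𝕜₂ F] [UniformSpace F] [IsUniformAddGroup F]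
    {𝔖 : Set (Set E)} {U : ℕ → UniformConvergenceCLM σ F 𝔖} (hU : CauchySeq U) {s : Set E}
    (hs : s ∈ 𝔖) : UniformCauchySeqOn (fun k => ⇑(U k)) atTop s := by
  have h := cauchySeq_iff_tendsto.1 <|
    (UniformConvergenceCLM.isUniformInducing_coeFn σ F 𝔖).uniformContinuous.comp_cauchySeq hU
  rw [← prod_atTop_atTop_eq] at h
  exact fun V hV => h.eventually_mem (UniformOnFun.gen_mem_uniformity F 𝔖 hs hV)

namespace WeakDual

variable {𝕜 G : Type*} [RCLike 𝕜] [AddCommGroup G] [Module 𝕜 G] [TopologicalSpace G]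

theorem smul_add_smul_mem_polar {s : Set G} {e₁ e₂ : WeakDual 𝕜 G} (h₁ : e₁ ∈ polar 𝕜 s)
    (h₂ : e₂ ∈ polar 𝕜 s) {a b : 𝕜} (hab : ‖a‖ + ‖b‖ ≤ 1) : a • e₁ + b • e₂ ∈ polar 𝕜 s := by
  intro v hv
  change ‖a * e₁ v + b * e₂ v‖ ≤ 1
  calc ‖a * e₁ v + b * e₂ v‖ ≤ ‖a‖ * ‖e₁ v‖ + ‖b‖ * ‖e₂ v‖ := by
        simpa only [norm_mul] using norm_add_le (a * e₁ v) (b * e₂ v)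
    _ ≤ ‖a‖ * 1 + ‖b‖ * 1 := by gcongr; exacts [h₁ v hv, h₂ v hv]
    _ ≤ 1 := by simpa using hab

def evalCLM (x : G) : WeakDual 𝕜 G →L[𝕜] 𝕜 :=
  ⟨(topDualPairing 𝕜 G).flip x, eval_continuous x⟩

@[simp]
theorem evalCLM_apply (x : G) (e : WeakDual 𝕜 G) : evalCLM x e = e x := rfl

end WeakDual

section KappaDual

variable {𝕜 F : Type*} [RCLike 𝕜] [AddCommGroup F] [Module 𝕜 F] [Module ℝ F] [UniformSpace F]

theorem image_polar_mem_kappaSets [IsScalarTower ℝ 𝕜 F] {E : Type*} [AddCommGroup E] [Module 𝕜 E]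
    [TopologicalSpace E] [IsTopologicalAddGroup E] [ContinuousSMul 𝕜 E]
    (T : WeakDual 𝕜 E →ₗ[𝕜] F) {V : Set E} (hV : V ∈ 𝓝 0)
    (hT : ContinuousOn T (WeakDual.polar 𝕜 V)) : T '' WeakDual.polar 𝕜 V ∈ kappaSets 𝕜 F := by
  refine ⟨(WeakDual.isCompact_polar_of_mem_nhds hV).image_of_continuousOn hT, ?_, ?_⟩
  · rintro a ha _ ⟨_, ⟨e, he, rfl⟩, rfl⟩
    refine ⟨a • e, ?_, map_smul T a e⟩
    simpa using WeakDual.smul_add_smul_mem_polar he he (b := 0) (by simpa using ha)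
  · rintro _ ⟨e₁, he₁, rfl⟩ _ ⟨e₂, he₂, rfl⟩ s t hs ht hst
    refine ⟨(s : 𝕜) • e₁ + (t : 𝕜) • e₂, WeakDual.smul_add_smul_mem_polar he₁ he₂ ?_, ?_⟩
    · simpa [abs_of_nonneg hs, abs_of_nonneg ht] using hst.le
    · rw [map_add, map_smul, map_smul, RCLike.real_smul_eq_coe_smul (K := 𝕜) s,
        RCLike.real_smul_eq_coe_smul (K := 𝕜) t]

variable [ContinuousSMul 𝕜 F]

theorem sUnion_kappaSets [IsScalarTower ℝ 𝕜 F] : ⋃₀ kappaSets 𝕜 F = univ := by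
  refine eq_univ_of_forall fun x => ⟨(· • x) '' Metric.closedBall (0 : 𝕜) 1, ⟨?_, ?_, ?_⟩,
    1, by simp, one_smul 𝕜 x⟩
  · exact (isCompact_closedBall 0 1).image (continuous_id.smul continuous_const)
  · rintro a ha _ ⟨_, ⟨c, hc, rfl⟩, rfl⟩
    refine ⟨a * c, ?_, mul_smul a c x⟩
    simpa using mul_le_one₀ ha (norm_nonneg c) (by simpa using hc)
  · exact (convex_closedBall (0 : 𝕜) 1).linear_image
      ((LinearMap.toSpanSingleton 𝕜 F x).restrictScalars ℝ)

variable [IsUniformAddGroup F]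

instance [IsScalarTower ℝ 𝕜 F] : ContinuousEvalConst (DualKappa 𝕜 F) F 𝕜 :=
  UniformConvergenceCLM.continuousEvalConst _ _ _ sUnion_kappaSets

def DualKappa.evalCLM [IsScalarTower ℝ 𝕜 F] (x : F) : DualKappa 𝕜 F →L[𝕜] 𝕜 where
  toFun φ := φ x
  map_add' _ _ := rfl
  map_smul' _ _ := rfl
  cont := continuous_eval_const x

@[simp]
theorem DualKappa.evalCLM_apply [IsScalarTower ℝ 𝕜 F] (x : F) (φ : DualKappa 𝕜 F) :
    DualKappa.evalCLM x φ = φ x := rfl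

theorem DualKappa.equicontinuous_polar {W : Set F} (hW : W ∈ 𝓝 0) :
    Equicontinuous fun φ : {φ : DualKappa 𝕜 F | ∀ y ∈ W, ‖φ y‖ ≤ 1} => (φ.1 : F → 𝕜) :=
  equicontinuous_of_forall_norm_le_one (fun φ : {φ : DualKappa 𝕜 F | ∀ y ∈ W, ‖φ y‖ ≤ 1} => φ.1)
    hW fun φ => φ.2

end KappaDual

namespace EpsilonProduct

variable {𝕜 F E : Type*} [RCLike 𝕜]
  [AddCommGroup F] [Module 𝕜 F] [UniformSpace F] [IsUniformAddGroup F] [ContinuousSMul 𝕜 F]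
  [Module ℝ F]
  [AddCommGroup E] [Module 𝕜 E] [UniformSpace E] [IsUniformAddGroup E] [ContinuousSMul 𝕜 E]
  {U : ℕ → EpsilonProduct 𝕜 F E} {w : ℕ → WeakDual 𝕜 E →L[𝕜] F}

theorem exists_tendsto_apply [T2Space E]
    (hEsc : ∀ x : ℕ → E, CauchySeq x → ∃ l, Tendsto x atTop (𝓝 l)) (hU : CauchySeq U) :
    ∃ u : DualKappa 𝕜 F →ₗ[𝕜] E, ∀ φ, Tendsto (fun k => U k φ) atTop (𝓝 (u φ)) := by
  have hcauchy (φ : DualKappa 𝕜 F) : CauchySeq fun k => U k φ :=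
    (UniformConvergenceCLM.uniformCauchySeqOn_of_cauchySeq hU
      (equicontinuous_finite.2 fun ψ => ψ.1.continuous : _ ∈ _)).cauchySeq (mem_singleton φ)
  choose u hu using fun φ => hEsc _ (hcauchy φ)
  exact ⟨linearMapOfTendsto u (fun k => (U k : DualKappa 𝕜 F →ₗ[𝕜] E)) (tendsto_pi_nhds.2 hu), hu⟩

variable [IsScalarTower ℝ 𝕜 F]

theorem continuous_of_tendsto_of_transpose [Module ℝ E] [IsScalarTower ℝ 𝕜 E]
    [LocallyConvexSpace ℝ E]
    (hw : ∀ k φ (e : WeakDual 𝕜 E), e (U k φ) = φ (w k e)) (T : WeakDual 𝕜 E →ₗ[𝕜] F)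
    (hT : ∀ V ∈ 𝓝 (0 : E), TendstoUniformlyOn (fun k => ⇑(w k)) T atTop (WeakDual.polar 𝕜 V))
    (u : DualKappa 𝕜 F →ₗ[𝕜] E) (hu : ∀ φ, Tendsto (fun k => U k φ) atTop (𝓝 (u φ))) :
    Continuous u := by
  refine continuous_of_continuousAt_zero u ?_
  rw [ContinuousAt, map_zero]
  intro V₀ hV₀
  rw [mem_map]
  obtain ⟨V, hV, hVV₀, hVcl, hVbal, hVcx⟩ := exists_isClosed_balanced_convex_subset (𝕜 := 𝕜) hV₀
  have hK := image_polar_mem_kappaSets T hV <|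
    (hT V hV).continuousOn (Frequently.of_forall fun k => (w k).continuous.continuousOn)
  filter_upwards [UniformConvergenceCLM.eventually_nhds_zero_mapsTo _ hK
    (Metric.closedBall_mem_nhds (0 : 𝕜) one_pos)] with φ hφ
  refine hVV₀ (mem_of_forall_polar_norm_le_one hVcl hVbal hVcx (mem_of_mem_nhds hV) fun e he => ?_)
  let e' : WeakDual 𝕜 E := StrongDual.toWeakDual e
  have he' : e' ∈ WeakDual.polar 𝕜 V := he
  -- `e (u φ) = lim e (U k φ) = lim φ (w k e) = φ (T e)`, and `T e ∈ T '' polar V`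
  have h₁ : Tendsto (fun k => e' (U k φ)) atTop (𝓝 (e' (u φ))) :=
    (e.continuous.tendsto _).comp (hu φ)
  have h₂ : Tendsto (fun k => e' (U k φ)) atTop (𝓝 (φ (T e'))) := by
    simp_rw [hw]
    exact (φ.continuous.tendsto _).comp ((hT V hV).tendsto_at he')
  change ‖e' (u φ)‖ ≤ 1
  rw [tendsto_nhds_unique h₁ h₂]
  simpa using hφ ⟨e', he', rfl⟩

variable [LocallyConvexSpace ℝ F]

theorem uniformCauchySeqOn_polar_of_transpose (hU : CauchySeq U)
    (hw : ∀ k φ (e : WeakDual 𝕜 E), e (U k φ) = φ (w k e)) {V : Set E} (hV : V ∈ 𝓝 0) :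
    UniformCauchySeqOn (fun k => ⇑(w k)) atTop (WeakDual.polar 𝕜 V) := by
  refine uniformCauchySeqOn_iff_sub.2 fun W₀ hW₀ => ?_
  obtain ⟨W, hW, hWW₀, hWcl, hWbal, hWcx⟩ := exists_isClosed_balanced_convex_subset (𝕜 := 𝕜) hW₀
  have hUW := UniformConvergenceCLM.uniformCauchySeqOn_of_cauchySeq hU
    (DualKappa.equicontinuous_polar hW : _ ∈ _)
  filter_upwards [uniformCauchySeqOn_iff_sub.1 hUW V hV] with m hm e he
  refine hWW₀ (mem_of_forall_polar_norm_le_one hWcl hWbal hWcx (mem_of_mem_nhds hW) fun ψ hψ => ?_)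
  let ψ' : DualKappa 𝕜 F := ψ
  have h : ‖e (U m.2 ψ' - U m.1 ψ')‖ ≤ 1 := he _ (hm ψ' hψ)
  rw [map_sub, hw, hw, ← map_sub] at h
  exact h

theorem exists_tendstoUniformlyOn_polar_transpose [T2Space F]
    (hFsc : ∀ x : ℕ → F, CauchySeq x → ∃ l, Tendsto x atTop (𝓝 l)) (hU : CauchySeq U)
    (hw : ∀ k φ (e : WeakDual 𝕜 E), e (U k φ) = φ (w k e)) :
    ∃ T : WeakDual 𝕜 E →ₗ[𝕜] F, ∀ V ∈ 𝓝 (0 : E),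
      TendstoUniformlyOn (fun k => ⇑(w k)) T atTop (WeakDual.polar 𝕜 V) := by
  have hcauchy (e : WeakDual 𝕜 E) : CauchySeq fun k => w k e := by
    have hV : {v | ‖e v‖ ≤ 1} ∈ 𝓝 (0 : E) := by
      have : Tendsto (fun v => ‖e v‖) (𝓝 0) (𝓝 0) := by
        simpa using (WeakDual.toStrongDual e).continuous.norm.tendsto 0
      exact this (Iic_mem_nhds one_pos)
    exact (uniformCauchySeqOn_polar_of_transpose hU hw hV).cauchySeq fun v hv => hv
  choose T hT using fun e => hFsc _ (hcauchy e)
  refine ⟨linearMapOfTendsto T (fun k => (w k : WeakDual 𝕜 E →ₗ[𝕜] F)) (tendsto_pi_nhds.2 hT),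
    fun V hV => ?_⟩
  exact (uniformCauchySeqOn_polar_of_transpose hU hw hV).tendstoUniformlyOn_of_tendsto
    fun e _ => hT e

theorem exists_tendsto_of_cauchySeq [T2Space F] [T2Space E] [Module ℝ E] [IsScalarTower ℝ 𝕜 E]
    [LocallyConvexSpace ℝ E]
    (hFsc : ∀ x : ℕ → F, CauchySeq x → ∃ l, Tendsto x atTop (𝓝 l))
    (hEsc : ∀ x : ℕ → E, CauchySeq x → ∃ l, Tendsto x atTop (𝓝 l)) (hU : CauchySeq U)
    (hw : ∀ k φ (e : WeakDual 𝕜 E), e (U k φ) = φ (w k e)) : ∃ u, Tendsto U atTop (𝓝 u) := by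
  obtain ⟨T, hT⟩ := exists_tendstoUniformlyOn_polar_transpose hFsc hU hw
  obtain ⟨u, hu⟩ := exists_tendsto_apply hEsc hU
  refine ⟨⟨u, continuous_of_tendsto_of_transpose hw T hT u hu⟩,
    (UniformConvergenceCLM.tendsto_iff_tendstoUniformlyOn _ _ _).2 fun H hH => ?_⟩
  exact (UniformConvergenceCLM.uniformCauchySeqOn_of_cauchySeq hU hH).tendstoUniformlyOn_of_tendsto
    fun φ _ => hu φ

end EpsilonProduct

theorem stmt7_general {𝕜 Ω FF FE E : Type*} [RCLike 𝕜]
    [FunLike FF Ω 𝕜] [AddCommGroup FF] [Module 𝕜 FF] [UniformSpace FF]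
    [IsUniformAddGroup FF] [ContinuousSMul 𝕜 FF] [T2Space FF] [Module ℝ FF]
    [IsScalarTower ℝ 𝕜 FF] [LocallyConvexSpace ℝ FF]
    [AddCommGroup E] [Module 𝕜 E] [UniformSpace E] [IsUniformAddGroup E]
    [ContinuousSMul 𝕜 E] [T2Space E] [Module ℝ E] [IsScalarTower ℝ 𝕜 E]
    [LocallyConvexSpace ℝ E]
    [FunLike FE Ω E] [AddCommGroup FE] [Module 𝕜 FE] [UniformSpace FE]
    [IsUniformAddGroup FE] [T2Space FE]
    -- the point evaluations `δₓ ∈ F(Ω)'`: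
    (δ : Ω → (FF →L[𝕜] 𝕜)) (hδ : ∀ (x : Ω) (g : FF), δ x g = g x)
    -- `S` is an isomorphism into:
    (S : EpsilonProduct 𝕜 FF E →ₗ[𝕜] FE)
    (hS : ∀ (u : EpsilonProduct 𝕜 FF E) (x : Ω), S u x = u (δ x))
    (hSemb : IsInducing (⇑S))
    -- `F(Ω)` and `E` are sequentially complete:
    (hFsc : ∀ x : ℕ → FF, CauchySeq x → ∃ l, Tendsto x atTop (𝓝 l))
    (hEsc : ∀ x : ℕ → E, CauchySeq x → ∃ l, Tendsto x atTop (𝓝 l))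
    -- every `f ∈ F(Ω,E)` has a convergent series representation `f = Σₙ λₙᴱ(f) fₙ`:
    (f : ℕ → FF)
    (hserie : ∀ g : FE, ∃ lamE : ℕ → E, ∃ psum : ℕ → FE,
      (∀ (k : ℕ) (x : Ω), psum k x = ∑ n ∈ Finset.range k, f n x • lamE n) ∧
      Tendsto psum atTop (𝓝 g)) :
    Function.Surjective (⇑S) := by
  intro g
  obtain ⟨lamE, psum, hpsum, hlim⟩ := hserie g
  let U (k : ℕ) : EpsilonProduct 𝕜 FF E :=
    ∑ n ∈ Finset.range k, (DualKappa.evalCLM (f n)).smulRight (lamE n)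
  let w (k : ℕ) : WeakDual 𝕜 E →L[𝕜] FF :=
    ∑ n ∈ Finset.range k, (WeakDual.evalCLM (lamE n)).smulRight (f n)
  have hU_apply (k : ℕ) (φ : DualKappa 𝕜 FF) : U k φ = ∑ n ∈ Finset.range k, φ (f n) • lamE n := by
    change (∑ n ∈ Finset.range k, (DualKappa.evalCLM (f n)).smulRight (lamE n) :
      DualKappa 𝕜 FF →L[𝕜] E) φ = _
    simp [sum_apply]
  have hw (k : ℕ) (φ : DualKappa 𝕜 FF) (e : WeakDual 𝕜 E) : e (U k φ) = φ (w k e) := by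
    simp [hU_apply, w, sum_apply, map_sum, mul_comm]
  have hSU (k : ℕ) : S (U k) = psum k := DFunLike.ext _ _ fun x => by
    rw [hS, hpsum]
    refine (hU_apply k (δ x)).trans (Finset.sum_congr rfl fun n _ => ?_)
    rw [← hδ x (f n)]
    rfl
  have hU : CauchySeq U := by
    refine (AddMonoidHom.isUniformInducing_of_isInducing hSemb).cauchy_map_iff.1 ?_
    rw [map_map, show ⇑S ∘ U = psum from funext hSU]
    exact hlim.cauchySeq
  obtain ⟨u, hu⟩ := EpsilonProduct.exists_tendsto_of_cauchySeq hFsc hEsc hU hw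
  refine ⟨u, tendsto_nhds_unique ((hSemb.continuous.tendsto u).comp hu) ?_⟩
  simpa [Function.comp_def, hSU] using hlim

/-- Let `F(Ω) ⊆ 𝕜^Ω` and `F(Ω,E) ⊆ E^Ω` be locally convex Hausdorff spaces
with continuous point evaluations on `F(Ω)` and `S : F(Ω) ε E → F(Ω,E)`, `S(u)(x) = u(δₓ)`,
an isomorphism into.  Suppose there is a sequence `(fₙ)` in `F(Ω)` such that every
`f ∈ F(Ω,E)` has a representation `f = Σₙ λₙᴱ(f) • fₙ` convergent in `F(Ω,E)`.  If `F(Ω)`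
and `E` are sequentially complete, then `S` is surjective, i.e. `F(Ω,E) ≅ F(Ω) ε E`. -/
theorem stmt7 {𝕜 Ω FF FE E : Type*} [RCLike 𝕜]
    [FunLike FF Ω 𝕜] [AddCommGroup FF] [Module 𝕜 FF] [UniformSpace FF]
    [IsUniformAddGroup FF] [ContinuousSMul 𝕜 FF] [T2Space FF] [Module ℝ FF]
    [IsScalarTower ℝ 𝕜 FF] [LocallyConvexSpace ℝ FF]
    [AddCommGroup E] [Module 𝕜 E] [UniformSpace E] [IsUniformAddGroup E]
    [ContinuousSMul 𝕜 E] [T2Space E] [Module ℝ E] [IsScalarTower ℝ 𝕜 E]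
    [LocallyConvexSpace ℝ E]
    [FunLike FE Ω E] [AddCommGroup FE] [Module 𝕜 FE] [UniformSpace FE]
    [IsUniformAddGroup FE] [ContinuousSMul 𝕜 FE] [T2Space FE] [Module ℝ FE]
    [IsScalarTower ℝ 𝕜 FE] [LocallyConvexSpace ℝ FE]
    -- the point evaluations `δₓ ∈ F(Ω)'`:
    (δ : Ω → (FF →L[𝕜] 𝕜)) (hδ : ∀ (x : Ω) (g : FF), δ x g = g x)
    -- `S` is an isomorphism into:
    (S : EpsilonProduct 𝕜 FF E →ₗ[𝕜] FE)
    (hS : ∀ (u : EpsilonProduct 𝕜 FF E) (x : Ω), S u x = u (δ x))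
    (hSemb : IsInducing (⇑S)) (hSinj : Function.Injective (⇑S))
    -- `F(Ω)` and `E` are sequentially complete:
    (hFsc : ∀ x : ℕ → FF, CauchySeq x → ∃ l, Tendsto x atTop (𝓝 l))
    (hEsc : ∀ x : ℕ → E, CauchySeq x → ∃ l, Tendsto x atTop (𝓝 l))
    -- every `f ∈ F(Ω,E)` has a convergent series representation `f = Σₙ λₙᴱ(f) fₙ`:
    (f : ℕ → FF)
    (hserie : ∀ g : FE, ∃ lamE : ℕ → E, ∃ psum : ℕ → FE,
      (∀ (k : ℕ) (x : Ω), psum k x = ∑ n ∈ Finset.range k, f n x • lamE n) ∧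
      Tendsto psum atTop (𝓝 g)) :
    Function.Surjective (⇑S) :=
  stmt7_general δ hδ S hS hSemb hFsc hEsc f hserie
end

section
/- Let E be a locally convex Hausdorff space and d ∈ ℕ. For every x = (xₖ) in the space s(ℤ^d, E) of E-valued rapidly decreasing sequences, the partial sums Σ_{|n| ≤ k} xₙ φₙ converge to x in s(ℤ^d, E); moreover the error estimate |x − Σ_{|n|≤k} xₙφₙ|_{j,α} ≤ (1+k²)^{−j/2} |x|_{2j,α} holds for all j ∈ ℕ and seminorm indices α. -/
/-!
Outside the ball `|m| ≤ k` the weight `1 + |m|²` is at least `1 + k²`, so there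
`(1 + |m|²)^(j/2) ≤ (1 + k²)^(-t) (1 + |m|²)^(j/2 + t)` for every `t ≥ 0`. Hence the tail of `x`
in the `(j, α)`-seminorm is at most `(1 + k²)^(-t)` times the `(j + 2t, α)`-seminorm of `x`:
with `2t = j` this is the error estimate, and with `2t = 1` it gives convergence.
-/

open Filter Topology

noncomputable def zNorm {d : ℕ} (m : Fin d → ℤ) : ℝ :=
  Real.sqrt (∑ i, ((m i : ℝ)) ^ 2)

lemma rpow_le_rpow_neg_mul_rpow_add {c w : ℝ} (hc : 0 < c) (hcw : c ≤ w) (s : ℝ) {t : ℝ}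
    (ht : 0 ≤ t) : w ^ s ≤ c ^ (-t) * w ^ (s + t) := by
  have hw : 0 < w := hc.trans_le hcw
  calc w ^ s = w ^ (-t) * w ^ (s + t) := by rw [← Real.rpow_add hw]; ring_nf
    _ ≤ c ^ (-t) * w ^ (s + t) :=
      mul_le_mul_of_nonneg_right (Real.rpow_le_rpow_of_nonpos hc hcw (neg_nonpos.mpr ht))
        (Real.rpow_nonneg hw.le _)

lemma iSup_ite_zero_mul_rpow_le {α : Type*} (f w : α → ℝ) (p : α → Prop) [DecidablePred p]
    (hf : ∀ m, 0 ≤ f m) (hw : ∀ m, 0 ≤ w m) {c : ℝ} (hc : 0 < c) (hcw : ∀ m, ¬ p m → c ≤ w m)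
    (s : ℝ) {t : ℝ} (ht : 0 ≤ t) (hbdd : BddAbove (Set.range fun m => f m * w m ^ (s + t))) :
    (⨆ m, (if p m then 0 else f m) * w m ^ s) ≤ c ^ (-t) * ⨆ m, f m * w m ^ (s + t) := by
  have hS : 0 ≤ ⨆ m, f m * w m ^ (s + t) :=
    Real.iSup_nonneg fun m => mul_nonneg (hf m) (Real.rpow_nonneg (hw m) _)
  refine Real.iSup_le (fun m => ?_) (by positivity)
  split_ifs with hm
  · rw [zero_mul]
    positivity
  · calc f m * w m ^ s ≤ f m * (c ^ (-t) * w m ^ (s + t)) :=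
          mul_le_mul_of_nonneg_left (rpow_le_rpow_neg_mul_rpow_add hc (hcw m hm) s ht) (hf m)
      _ = c ^ (-t) * (f m * w m ^ (s + t)) := by ring
      _ ≤ c ^ (-t) * ⨆ m, f m * w m ^ (s + t) := by gcongr; exact le_ciSup hbdd m

section zNorm

variable {d : ℕ} (f : (Fin d → ℤ) → ℝ) (hf : ∀ m, 0 ≤ f m)
include hf

lemma iSup_zNorm_tail_le (s : ℝ) {t : ℝ} (ht : 0 ≤ t) (k : ℕ)
    (hbdd : BddAbove (Set.range fun m => f m * (1 + zNorm m ^ 2) ^ (s + t))) :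
    (⨆ m : Fin d → ℤ, (if zNorm m ≤ k then 0 else f m) * (1 + zNorm m ^ 2) ^ s) ≤
      (1 + (k : ℝ) ^ 2) ^ (-t) * ⨆ m, f m * (1 + zNorm m ^ 2) ^ (s + t) := by
  refine iSup_ite_zero_mul_rpow_le f _ _ hf (fun m => by positivity) (by positivity)
    (fun m hm => ?_) s ht hbdd
  have hk : (k : ℝ) ≤ zNorm m := (not_le.mp hm).le
  gcongr

lemma tendsto_iSup_zNorm_tail (s : ℝ) {t : ℝ} (ht : 0 < t)
    (hbdd : BddAbove (Set.range fun m => f m * (1 + zNorm m ^ 2) ^ (s + t))) :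
    Tendsto (fun k : ℕ => ⨆ m : Fin d → ℤ,
      (if zNorm m ≤ k then 0 else f m) * (1 + zNorm m ^ 2) ^ s) atTop (𝓝 0) := by
  have hweight : Tendsto (fun k : ℕ => 1 + (k : ℝ) ^ 2) atTop atTop :=
    tendsto_atTop_add_const_left _ _ <|
      (tendsto_pow_atTop two_ne_zero).comp tendsto_natCast_atTop_atTop
  have hbound : Tendsto (fun k : ℕ => (1 + (k : ℝ) ^ 2) ^ (-t) *
      ⨆ m, f m * (1 + zNorm m ^ 2) ^ (s + t)) atTop (𝓝 0) := by
    simpa using ((tendsto_rpow_neg_atTop ht).comp hweight).mul_const _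
  refine squeeze_zero (fun k => Real.iSup_nonneg fun m => ?_)
    (fun k => iSup_zNorm_tail_le f hf s ht.le k hbdd) hbound
  split_ifs
  · rw [zero_mul]
  · exact mul_nonneg (hf m) (by positivity)

end zNorm

theorem stmt9_general {𝕜 E ι : Type*} [RCLike 𝕜]
    [AddCommGroup E] [Module 𝕜 E]
    (q : SeminormFamily 𝕜 E ι)
    (d : ℕ)
    -- `x ∈ s(ℤ^d, E)`:
    (x : (Fin d → ℤ) → E)
    (hx : ∀ (j : ℕ) (α : ι), BddAbove (Set.range fun m : Fin d → ℤ =>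
      q α (x m) * (1 + zNorm m ^ 2) ^ ((j : ℝ) / 2))) :
    -- convergence of the partial sums in every seminorm of `s(ℤ^d, E)`:
    (∀ (j : ℕ) (α : ι),
      Tendsto (fun k : ℕ => ⨆ m : Fin d → ℤ,
          q α (if zNorm m ≤ k then 0 else x m) * (1 + zNorm m ^ 2) ^ ((j : ℝ) / 2))
        atTop (𝓝 0)) ∧
    -- error estimate `|x − P_k x|_{j,α} ≤ (1+k²)^{−j/2} |x|_{2j,α}`:
    (∀ (j : ℕ) (α : ι) (k : ℕ),
      (⨆ m : Fin d → ℤ,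
          q α (if zNorm m ≤ k then 0 else x m) * (1 + zNorm m ^ 2) ^ ((j : ℝ) / 2)) ≤
        (1 + (k : ℝ) ^ 2) ^ (-(j : ℝ) / 2) *
          ⨆ m : Fin d → ℤ, q α (x m) * (1 + zNorm m ^ 2) ^ (j : ℝ)) := by
  refine ⟨fun j α => ?_, fun j α k => ?_⟩ <;> simp only [apply_ite (q α), map_zero]
  · refine tendsto_iSup_zNorm_tail _ (fun m => apply_nonneg _ _) _ one_half_pos ?_
    convert hx (j + 1) α using 5
    push_cast
    ring
  · have hbdd := hx (2 * j) α
    rw [Nat.cast_mul, Nat.cast_two, mul_div_cancel_left₀ _ two_ne_zero, ← add_halves (j : ℝ)]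
      at hbdd
    simpa only [add_halves, neg_div] using
      iSup_zNorm_tail_le _ (fun m => apply_nonneg _ _) _ (by positivity) k hbdd

/-- For every `x = (xₖ)` in the space `s(ℤ^d, E)` of `E`-valued rapidly
decreasing sequences, the partial sums `Σ_{|n| ≤ k} xₙ φₙ` converge to `x` in `s(ℤ^d, E)`,
and the error estimate
`|x − Σ_{|n|≤k} xₙφₙ|_{j,α} ≤ (1+k²)^{−j/2} |x|_{2j,α}` holds for all `j` and `α`. -/
theorem stmt9 {𝕜 E ι : Type*} [RCLike 𝕜] [Nonempty ι]
    [AddCommGroup E] [Module 𝕜 E] [UniformSpace E] [IsUniformAddGroup E]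
    [ContinuousSMul 𝕜 E] [T2Space E] [Module ℝ E] [IsScalarTower ℝ 𝕜 E]
    [LocallyConvexSpace ℝ E]
    (q : SeminormFamily 𝕜 E ι) (hq : WithSeminorms q)
    (d : ℕ)
    -- `x ∈ s(ℤ^d, E)`:
    (x : (Fin d → ℤ) → E)
    (hx : ∀ (j : ℕ) (α : ι), BddAbove (Set.range fun m : Fin d → ℤ =>
      q α (x m) * (1 + zNorm m ^ 2) ^ ((j : ℝ) / 2))) :
    -- convergence of the partial sums in every seminorm of `s(ℤ^d, E)`:
    (∀ (j : ℕ) (α : ι),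
      Tendsto (fun k : ℕ => ⨆ m : Fin d → ℤ,
          q α (if zNorm m ≤ k then 0 else x m) * (1 + zNorm m ^ 2) ^ ((j : ℝ) / 2))
        atTop (𝓝 0)) ∧
    -- error estimate `|x − P_k x|_{j,α} ≤ (1+k²)^{−j/2} |x|_{2j,α}`:
    (∀ (j : ℕ) (α : ι) (k : ℕ),
      (⨆ m : Fin d → ℤ,
          q α (if zNorm m ≤ k then 0 else x m) * (1 + zNorm m ^ 2) ^ ((j : ℝ) / 2)) ≤
        (1 + (k : ℝ) ^ 2) ^ (-(j : ℝ) / 2) *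
          ⨆ m : Fin d → ℤ, q α (x m) * (1 + zNorm m ^ 2) ^ (j : ℝ)) :=
  stmt9_general q d x hx
end

section
/- Let E be a sequentially complete locally convex Hausdorff space, f ∈ S(ℝ^d, E) an E-valued Schwartz function, and hₙ the n-th Hermite function for n ∈ ℕ₀^d. Then the product f·hₙ is Pettis-integrable on ℝ^d, i.e., there exists y ∈ E with ⟨e', y⟩ = ∫_{ℝ^d} ⟨e', f(x)⟩ hₙ(x) dx for every e' ∈ E'. -/
/-!
The dyadic Riemann sums `y k` of `G = hₙ • f` (mesh `2⁻ᵏ`, on `[-k, k)ᵈ`) form a Cauchy sequence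
in `E`. For a continuous seminorm `p` and every functional `φ` with `|φ| ≤ p`, we have
`|φ (y k) - ∫ φ ∘ G| ≤ ∫ p (G - Sₖ)`, where `Sₖ` is the step function with integral `y k`; this bound
tends to `0` by dominated convergence, with majorant `C (1 + ‖x‖)^(-r)`, `r > d`, coming from the
decay of `f` and the boundedness of `hₙ`. Hahn–Banach gives such a `φ` with
`φ (y j - y k) = p (y j - y k)`, so `y` is Cauchy, and its limit, which exists by sequential
completeness, represents every scalar integral.
-/

open Filter Topology MeasureTheory

section SmoothLC

variable {d : ℕ} {E : Type*} [AddCommGroup E] [Module ℝ E] [UniformSpace E]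

/-- The partial derivative of an `E`-valued function in the `i`-th coordinate direction,
defined via the limit of difference quotients (junk value if the limit does not exist). -/
noncomputable def pd (i : Fin d) (f : (Fin d → ℝ) → E) : (Fin d → ℝ) → E := fun x =>
  letI : Nonempty E := ⟨0⟩
  limUnder (𝓝[≠] (0 : ℝ))
    (fun h : ℝ => h⁻¹ • (f (fun j => x j + if j = i then h else 0) - f x))

/-- `f` has partial derivative `y` at `x` in direction `i`. -/
def HasPdAt (i : Fin d) (f : (Fin d → ℝ) → E) (x : Fin d → ℝ) (y : E) : Prop :=
  Tendsto (fun h : ℝ => h⁻¹ • (f (fun j => x j + if j = i then h else 0) - f x))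
    (𝓝[≠] (0 : ℝ)) (𝓝 y)

/-- Iterated partial derivative along a list of directions. -/
noncomputable def pdIter : List (Fin d) → ((Fin d → ℝ) → E) → ((Fin d → ℝ) → E)
  | [], f => f
  | i :: L, f => pd i (pdIter L f)

/-- `f` is infinitely continuously partially differentiable in the sense of
locally convex-valued calculus: all iterated partial derivatives exist and are continuous. -/
def IsSmoothE (f : (Fin d → ℝ) → E) : Prop :=
  ∀ L : List (Fin d), Continuous (pdIter L f) ∧
    ∀ (i : Fin d) (x : Fin d → ℝ), HasPdAt i (pdIter L f) x (pd i (pdIter L f) x)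

end SmoothLC

/-- The physicists' Hermite polynomials: `H₀ = 1`, `H_{n+1} = 2X·Hₙ − Hₙ'`. -/
noncomputable def physHermite : ℕ → Polynomial ℝ
  | 0 => 1
  | n + 1 => 2 * Polynomial.X * physHermite n - Polynomial.derivative (physHermite n)

/-- The `n`-th Hermite function `hₙ(x) = (2ⁿ n! √π)^{-1/2} Hₙ(x) e^{-x²/2}`. -/
noncomputable def hermiteFun (n : ℕ) (x : ℝ) : ℝ :=
  ((2 : ℝ) ^ n * n.factorial * Real.sqrt Real.pi) ^ (-(1 : ℝ) / 2) *
    (physHermite n).eval x * Real.exp (-x ^ 2 / 2)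

/-- The `d`-dimensional Hermite function `hₙ(x) = Π_k h_{n_k}(x_k)` for `n ∈ ℕ₀^d`. -/
noncomputable def hermiteFunD {d : ℕ} (n : Fin d → ℕ) (x : Fin d → ℝ) : ℝ :=
  ∏ i, hermiteFun (n i) (x i)

theorem Polynomial.exists_abs_eval_mul_exp_neg_sq_le (P : Polynomial ℝ) :
    ∃ B, ∀ x : ℝ, |P.eval x * Real.exp (-x ^ 2 / 2)| ≤ B := by
  induction P using Polynomial.induction_on' with
  | add P Q hP hQ =>
    obtain ⟨B, hB⟩ := hP
    obtain ⟨B', hB'⟩ := hQ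
    refine ⟨B + B', fun x => ?_⟩
    rw [Polynomial.eval_add, add_mul]
    exact (abs_add_le _ _).trans (add_le_add (hB x) (hB' x))
  | monomial n c =>
    refine ⟨|c| * n.factorial * Real.exp (1 / 2), fun x => ?_⟩
    have hpow : |x| ^ n ≤ n.factorial * Real.exp |x| := by
      have := Real.pow_div_factorial_le_exp _ (abs_nonneg x) n
      rwa [div_le_iff₀ (by positivity), mul_comm] at this
    have hexp : Real.exp |x| * Real.exp (-x ^ 2 / 2) ≤ Real.exp (1 / 2) := by
      rw [← Real.exp_add, Real.exp_le_exp]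
      nlinarith [sq_abs x, sq_nonneg (|x| - 1)]
    rw [Polynomial.eval_monomial, abs_mul, abs_mul, abs_pow, abs_of_pos (Real.exp_pos _)]
    calc |c| * |x| ^ n * Real.exp (-x ^ 2 / 2)
        ≤ |c| * (n.factorial * Real.exp |x|) * Real.exp (-x ^ 2 / 2) := by gcongr
      _ = |c| * n.factorial * (Real.exp |x| * Real.exp (-x ^ 2 / 2)) := by ring
      _ ≤ |c| * n.factorial * Real.exp (1 / 2) := by gcongr

theorem exists_abs_hermiteFun_le (n : ℕ) : ∃ B, ∀ x, |hermiteFun n x| ≤ B := by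
  obtain ⟨B, hB⟩ := (physHermite n).exists_abs_eval_mul_exp_neg_sq_le
  refine ⟨|((2 : ℝ) ^ n * n.factorial * Real.sqrt Real.pi) ^ (-(1 : ℝ) / 2)| * B, fun x => ?_⟩
  rw [hermiteFun, mul_assoc, abs_mul]
  gcongr
  exact hB x

theorem exists_abs_hermiteFunD_le {d : ℕ} (n : Fin d → ℕ) :
    ∃ B, ∀ x, |hermiteFunD n x| ≤ B := by
  choose B hB using fun i => exists_abs_hermiteFun_le (n i)
  refine ⟨∏ i, B i, fun x => ?_⟩
  rw [hermiteFunD, Finset.abs_prod]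
  exact Finset.prod_le_prod (fun _ _ => abs_nonneg _) fun i _ => hB i (x i)

theorem continuous_hermiteFunD {d : ℕ} (n : Fin d → ℕ) : Continuous (hermiteFunD n) := by
  unfold hermiteFunD hermiteFun
  fun_prop

section Dyadic

variable {d : ℕ}

noncomputable def dyadicIndex (k : ℕ) (x : Fin d → ℝ) : Fin d → ℤ := fun i => ⌊(2 : ℝ) ^ k * x i⌋

noncomputable def dyadicPoint (k : ℕ) (m : Fin d → ℤ) : Fin d → ℝ := fun i => m i / 2 ^ k

noncomputable def dyadicGrid (d k : ℕ) : Finset (Fin d → ℤ) :=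
  Fintype.piFinset fun _ => Finset.Ico (-(k * 2 ^ k : ℤ)) (k * 2 ^ k)

noncomputable def dyadicStep {E : Type*} [Zero E] (k : ℕ) (G : (Fin d → ℝ) → E)
    (x : Fin d → ℝ) : E :=
  if dyadicIndex k x ∈ dyadicGrid d k then G (dyadicPoint k (dyadicIndex k x)) else 0

noncomputable def dyadicRiemannSum {E : Type*} [AddCommMonoid E] [Module ℝ E] (k : ℕ)
    (G : (Fin d → ℝ) → E) : E :=
  ∑ m ∈ dyadicGrid d k, ((2 : ℝ) ^ k)⁻¹ ^ d • G (dyadicPoint k m)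

theorem dyadicIndex_preimage_singleton (k : ℕ) (m : Fin d → ℤ) :
    dyadicIndex k ⁻¹' {m} =
      Set.univ.pi fun i => Set.Ico ((m i : ℝ) / 2 ^ k) ((m i + 1) / 2 ^ k) := by
  ext x
  simp only [Set.mem_preimage, Set.mem_singleton_iff, Set.mem_univ_pi, Set.mem_Ico, dyadicIndex,
    funext_iff, Int.floor_eq_iff, div_le_iff₀ (by positivity : (0 : ℝ) < 2 ^ k),
    lt_div_iff₀ (by positivity : (0 : ℝ) < 2 ^ k), mul_comm ((2 : ℝ) ^ k)]

theorem measurableSet_dyadicIndex_preimage_singleton (k : ℕ) (m : Fin d → ℤ) :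
    MeasurableSet (dyadicIndex k ⁻¹' {m}) := by
  rw [dyadicIndex_preimage_singleton]
  exact MeasurableSet.univ_pi fun _ => measurableSet_Ico

theorem volume_dyadicIndex_preimage_singleton (k : ℕ) (m : Fin d → ℤ) :
    volume (dyadicIndex k ⁻¹' {m}) = ENNReal.ofReal (((2 : ℝ) ^ k)⁻¹ ^ d) := by
  rw [dyadicIndex_preimage_singleton, volume_pi_pi]
  simp only [Real.volume_Ico, add_div, add_sub_cancel_left, one_div, Finset.prod_const,
    Finset.card_univ, Fintype.card_fin]
  rw [← ENNReal.ofReal_pow (by positivity)]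

theorem dyadicStep_eq_sum {E : Type*} [AddCommMonoid E] (k : ℕ) (G : (Fin d → ℝ) → E)
    (x : Fin d → ℝ) :
    dyadicStep k G x =
      ∑ m ∈ dyadicGrid d k, (dyadicIndex k ⁻¹' {m}).indicator (fun _ => G (dyadicPoint k m)) x := by
  classical
  simp [dyadicStep, Set.indicator_apply]

theorem integrable_dyadicStep {F : Type*} [NormedAddCommGroup F] (k : ℕ)
    (G : (Fin d → ℝ) → F) : Integrable (dyadicStep k G) := by
  rw [funext (dyadicStep_eq_sum k G)]
  refine integrable_finsetSum _ fun m _ => ?_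
  rw [integrable_indicator_iff (measurableSet_dyadicIndex_preimage_singleton k m)]
  exact integrableOn_const (by simp [volume_dyadicIndex_preimage_singleton])

theorem integral_dyadicStep {F : Type*} [NormedAddCommGroup F] [NormedSpace ℝ F] [CompleteSpace F]
    (k : ℕ) (G : (Fin d → ℝ) → F) :
    ∫ x, dyadicStep k G x = dyadicRiemannSum k G := by
  rw [funext (dyadicStep_eq_sum k G), integral_finsetSum]
  · refine Finset.sum_congr rfl fun m _ => ?_
    rw [integral_indicator_const _ (measurableSet_dyadicIndex_preimage_singleton k m),
      measureReal_def, volume_dyadicIndex_preimage_singleton, ENNReal.toReal_ofReal (by positivity)]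
  · intro m _
    rw [integrable_indicator_iff (measurableSet_dyadicIndex_preimage_singleton k m)]
    exact integrableOn_const (by simp [volume_dyadicIndex_preimage_singleton])

theorem norm_sub_dyadicPoint_dyadicIndex_le (k : ℕ) (x : Fin d → ℝ) :
    ‖x - dyadicPoint k (dyadicIndex k x)‖ ≤ ((2 : ℝ) ^ k)⁻¹ := by
  refine (pi_norm_le_iff_of_nonneg (by positivity)).2 fun i => ?_
  have hfract :
      x i - dyadicPoint k (dyadicIndex k x) i = Int.fract ((2 : ℝ) ^ k * x i) / 2 ^ k := by
    simp only [dyadicPoint, dyadicIndex, Int.fract]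
    field_simp
  rw [Pi.sub_apply, hfract, Real.norm_eq_abs,
    abs_of_nonneg (div_nonneg (Int.fract_nonneg _) (by positivity)), div_eq_mul_inv]
  exact mul_le_of_le_one_left (by positivity) (Int.fract_lt_one _).le

theorem tendsto_dyadicPoint_dyadicIndex (x : Fin d → ℝ) :
    Tendsto (fun k => dyadicPoint k (dyadicIndex k x)) atTop (𝓝 x) := by
  have hmesh : Tendsto (fun k : ℕ => ((2 : ℝ) ^ k)⁻¹) atTop (𝓝 0) :=
    tendsto_inv_atTop_zero.comp (tendsto_pow_atTop_atTop_of_one_lt one_lt_two)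
  refine tendsto_iff_norm_sub_tendsto_zero.2
    (squeeze_zero (fun _ => norm_nonneg _) (fun k => ?_) hmesh)
  rw [norm_sub_rev]
  exact norm_sub_dyadicPoint_dyadicIndex_le k x

theorem eventually_dyadicIndex_mem_dyadicGrid (x : Fin d → ℝ) :
    ∀ᶠ k in atTop, dyadicIndex k x ∈ dyadicGrid d k := by
  have hlarge : ∀ i, ∀ᶠ k : ℕ in atTop, |x i| < k := fun i =>
    tendsto_natCast_atTop_atTop.eventually_gt_atTop _
  filter_upwards [eventually_all.2 hlarge] with k hk
  have hpos : (0 : ℝ) < 2 ^ k := by positivity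
  refine Fintype.mem_piFinset.2 fun i => Finset.mem_Ico.2 ⟨?_, ?_⟩
  · exact Int.le_floor.2 (by push_cast; nlinarith [abs_lt.1 (hk i)])
  · exact Int.floor_lt.2 (by push_cast; nlinarith [abs_lt.1 (hk i)])

theorem tendsto_dyadicStep {E : Type*} [Zero E] [TopologicalSpace E] {G : (Fin d → ℝ) → E}
    (hG : Continuous G) (x : Fin d → ℝ) :
    Tendsto (fun k => dyadicStep k G x) atTop (𝓝 (G x)) := by
  refine ((hG.tendsto x).comp (tendsto_dyadicPoint_dyadicIndex x)).congr' ?_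
  filter_upwards [eventually_dyadicIndex_mem_dyadicGrid x] with k hk
  simp [dyadicStep, hk]

theorem measurable_dyadicIndex (k : ℕ) : Measurable (dyadicIndex k : (Fin d → ℝ) → Fin d → ℤ) :=
  measurable_pi_lambda _ fun _ => (measurable_const.mul (measurable_pi_apply _)).floor

theorem measurable_dyadicPoint (k : ℕ) : Measurable (dyadicPoint k : (Fin d → ℤ) → Fin d → ℝ) :=
  measurable_of_countable _

end Dyadic

theorem one_add_norm_rpow_neg_dyadicPoint_le {d : ℕ} {r : ℝ} (hr : 0 ≤ r) (k : ℕ)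
    (x : Fin d → ℝ) :
    (1 + ‖dyadicPoint k (dyadicIndex k x)‖) ^ (-r) ≤ 2 ^ r * (1 + ‖x‖) ^ (-r) := by
  have hmesh : ((2 : ℝ) ^ k)⁻¹ ≤ 1 := inv_le_one_of_one_le₀ (one_le_pow₀ one_le_two)
  have hnorm : (1 + ‖x‖) / 2 ≤ 1 + ‖dyadicPoint k (dyadicIndex k x)‖ := by
    have := norm_le_norm_add_norm_sub' x (dyadicPoint k (dyadicIndex k x))
    linarith [norm_sub_dyadicPoint_dyadicIndex_le k x,
      norm_nonneg (dyadicPoint k (dyadicIndex k x))]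
  calc (1 + ‖dyadicPoint k (dyadicIndex k x)‖) ^ (-r)
      ≤ ((1 + ‖x‖) / 2) ^ (-r) := Real.rpow_le_rpow_of_nonpos (by positivity) hnorm (by linarith)
    _ = 2 ^ r * (1 + ‖x‖) ^ (-r) := by
      rw [Real.div_rpow (by positivity) zero_le_two, Real.rpow_neg zero_le_two]
      field_simp

section RiemannSum

variable {d : ℕ} {E : Type*} [AddCommGroup E] [Module ℝ E] {G : (Fin d → ℝ) → E}
  {p : Seminorm ℝ E} {C r : ℝ}

theorem seminorm_sub_dyadicStep_le (hr : 0 ≤ r) (hG : ∀ x, p (G x) ≤ C * (1 + ‖x‖) ^ (-r))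
    (k : ℕ) (x : Fin d → ℝ) :
    p (G x - dyadicStep k G x) ≤ C * (1 + 2 ^ r) * (1 + ‖x‖) ^ (-r) := by
  have hC : 0 ≤ C := nonneg_of_mul_nonneg_left ((apply_nonneg p _).trans (hG 0)) (by positivity)
  have hstep : p (dyadicStep k G x) ≤ C * 2 ^ r * (1 + ‖x‖) ^ (-r) := by
    unfold dyadicStep
    split_ifs
    · calc p (G (dyadicPoint k (dyadicIndex k x)))
          ≤ C * (1 + ‖dyadicPoint k (dyadicIndex k x)‖) ^ (-r) := hG _
        _ ≤ C * (2 ^ r * (1 + ‖x‖) ^ (-r)) :=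
          mul_le_mul_of_nonneg_left (one_add_norm_rpow_neg_dyadicPoint_le hr k x) hC
        _ = C * 2 ^ r * (1 + ‖x‖) ^ (-r) := by ring
    · rw [map_zero]
      positivity
  calc p (G x - dyadicStep k G x) ≤ p (G x) + p (dyadicStep k G x) := map_sub_le_add p _ _
    _ ≤ C * (1 + ‖x‖) ^ (-r) + C * 2 ^ r * (1 + ‖x‖) ^ (-r) := add_le_add (hG x) hstep
    _ = C * (1 + 2 ^ r) * (1 + ‖x‖) ^ (-r) := by ring

variable [TopologicalSpace E] [IsTopologicalAddGroup E]

theorem measurable_seminorm_sub_dyadicStep (hp : Continuous p) (hGc : Continuous G) (k : ℕ) :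
    Measurable fun x => p (G x - dyadicStep k G x) := by
  have hsplit : (fun x => p (G x - dyadicStep k G x)) = fun x =>
      if dyadicIndex k x ∈ dyadicGrid d k then p (G x - G (dyadicPoint k (dyadicIndex k x)))
      else p (G x) := by
    funext x
    unfold dyadicStep
    split_ifs <;> simp
  have hpair : Continuous fun q : (Fin d → ℝ) × (Fin d → ℝ) => p (G q.1 - G q.2) :=
    hp.comp ((hGc.comp continuous_fst).sub (hGc.comp continuous_snd))
  rw [hsplit]
  refine Measurable.ite ?_ ?_ (hp.comp hGc).measurable
  · exact measurable_dyadicIndex k (Set.toFinite _).measurableSet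
  · exact hpair.measurable.comp
      (measurable_id.prodMk ((measurable_dyadicPoint k).comp (measurable_dyadicIndex k)))

variable (hp : Continuous p) (hGc : Continuous G) (hr : (d : ℝ) < r)
  (hG : ∀ x, p (G x) ≤ C * (1 + ‖x‖) ^ (-r))
include hp hGc hr hG

theorem integrable_seminorm_sub_dyadicStep (k : ℕ) :
    Integrable fun x => p (G x - dyadicStep k G x) := by
  refine ((integrable_one_add_norm (by simpa using hr)).const_mul (C * (1 + 2 ^ r))).mono'
    (measurable_seminorm_sub_dyadicStep hp hGc k).aestronglyMeasurable (ae_of_all _ fun x => ?_)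
  rw [Real.norm_of_nonneg (apply_nonneg p _)]
  exact seminorm_sub_dyadicStep_le (Nat.cast_nonneg d |>.trans hr.le) hG k x

theorem tendsto_integral_seminorm_sub_dyadicStep :
    Tendsto (fun k => ∫ x, p (G x - dyadicStep k G x)) atTop (𝓝 0) := by
  have hlim : ∀ x, Tendsto (fun k => p (G x - dyadicStep k G x)) atTop (𝓝 0) := fun x => by
    have h := (tendsto_const_nhds (x := G x)).sub (tendsto_dyadicStep hGc x)
    simpa [Function.comp_def] using (hp.tendsto _).comp h
  simpa using tendsto_integral_of_dominated_convergence _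
    (fun k => (measurable_seminorm_sub_dyadicStep hp hGc k).aestronglyMeasurable)
    ((integrable_one_add_norm (by simpa using hr)).const_mul (C * (1 + 2 ^ r)))
    (fun k => ae_of_all _ fun x => by
      rw [Real.norm_of_nonneg (apply_nonneg p _)]
      exact seminorm_sub_dyadicStep_le (Nat.cast_nonneg d |>.trans hr.le) hG k x)
    (ae_of_all _ hlim)

end RiemannSum

theorem abs_apply_dyadicRiemannSum_sub_integral_le {d : ℕ} {E : Type*} [AddCommGroup E]
    [Module ℝ E] [TopologicalSpace E] {G : (Fin d → ℝ) → E} {p : Seminorm ℝ E}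
    (φ : StrongDual ℝ E) (hφ : ∀ u, |φ u| ≤ p u) (hφG : Integrable fun x => φ (G x)) (k : ℕ)
    (hp : Integrable fun x => p (G x - dyadicStep k G x)) :
    |φ (dyadicRiemannSum k G) - ∫ x, φ (G x)| ≤ ∫ x, p (G x - dyadicStep k G x) := by
  have hstep : ∀ x, φ (dyadicStep k G x) = dyadicStep k (fun x => φ (G x)) x := fun x => by
    unfold dyadicStep
    split_ifs <;> simp
  have hsum : φ (dyadicRiemannSum k G) = ∫ x, φ (dyadicStep k G x) := by
    rw [integral_congr_ae (ae_of_all _ hstep), integral_dyadicStep]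
    simp only [dyadicRiemannSum, map_sum, map_smul, smul_eq_mul]
  rw [hsum, ← integral_sub ((integrable_dyadicStep k _).congr (ae_of_all _ fun x => (hstep x).symm))
    hφG]
  rw [← Real.norm_eq_abs]
  refine norm_integral_le_of_norm_le hp (ae_of_all _ fun x => ?_)
  rw [Real.norm_eq_abs, ← map_sub, ← abs_neg, ← map_neg, neg_sub]
  exact hφ _

theorem Seminorm.exists_strongDual_abs_le_apply_eq {E : Type*} [AddCommGroup E] [Module ℝ E]
    [TopologicalSpace E] [PolynormableSpace ℝ E] {p : Seminorm ℝ E} (hp : Continuous p) (v : E) :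
    ∃ φ : StrongDual ℝ E, (∀ u, |φ u| ≤ p u) ∧ φ v = p v := by
  have hwd : ∀ c : ℝ, c • v = 0 → c • p v = 0 := fun c hc => by
    have : |c| * p v = 0 := by rw [← Real.norm_eq_abs, ← map_smul_eq_mul, hc, map_zero]
    rw [smul_eq_mul, ← abs_eq_zero, abs_mul, abs_of_nonneg (apply_nonneg p v), this]
  set f := LinearPMap.mkSpanSingleton' (σ := RingHom.id ℝ) v (p v) hwd
  have hfp : ∀ w : f.domain, f w ≤ p w := by
    rintro ⟨w, hw⟩
    obtain ⟨c, rfl⟩ := Submodule.mem_span_singleton.1 hw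
    rw [LinearPMap.mkSpanSingleton'_apply, smul_eq_mul, map_smul_eq_mul, Real.norm_eq_abs]
    exact mul_le_mul_of_nonneg_right (le_abs_self c) (apply_nonneg p v)
  obtain ⟨φ, hφf, hφp⟩ :=
    Module.Dual.exists_continuous_extension_of_le_seminorm_real f.domain f.toFun hp hfp
  refine ⟨φ, hφp, ?_⟩
  rw [hφf ⟨v, Submodule.mem_span_singleton_self v⟩]
  exact LinearPMap.mkSpanSingleton'_apply_self (σ := RingHom.id ℝ) v (p v) hwd _

theorem exists_forall_strongDual_apply_eq_of_approx {E : Type*} [AddCommGroup E] [Module ℝ E]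
    [UniformSpace E] [IsUniformAddGroup E] [PolynormableSpace ℝ E]
    (hE : ∀ u : ℕ → E, CauchySeq u → ∃ l, Tendsto u atTop (𝓝 l))
    {y : ℕ → E} {Λ : StrongDual ℝ E → ℝ}
    (happrox : ∀ p : Seminorm ℝ E, Continuous p → ∃ I : ℕ → ℝ, Tendsto I atTop (𝓝 0) ∧
      ∀ φ : StrongDual ℝ E, (∀ u, |φ u| ≤ p u) → ∀ k, |φ (y k) - Λ φ| ≤ I k) :
    ∃ z, ∀ φ : StrongDual ℝ E, φ z = Λ φ := by
  have hcauchy : CauchySeq y := by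
    refine (IsUniformAddGroup.cauchy_map_iff_tendsto _ _).2 ⟨inferInstance, ?_⟩
    refine ((PolynormableSpace.withSeminorms ℝ E).tendsto_nhds _ _).2 fun ⟨p, hp⟩ ε hε => ?_
    obtain ⟨I, hI, hIφ⟩ := happrox p hp
    have hsmall : ∀ᶠ k in atTop, I k < ε / 2 := hI.eventually (gt_mem_nhds (half_pos hε))
    filter_upwards [tendsto_fst.eventually hsmall, tendsto_snd.eventually hsmall] with q hq₁ hq₂
    obtain ⟨φ, hφp, hφv⟩ := Seminorm.exists_strongDual_abs_le_apply_eq hp (y q.1 - y q.2)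
    have h₁ := hIφ φ hφp q.1
    have h₂ := hIφ φ hφp q.2
    rw [sub_zero, ← hφv, map_sub]
    linarith [abs_le.1 h₁, abs_le.1 h₂]
  obtain ⟨z, hz⟩ := hE y hcauchy
  refine ⟨z, fun φ => tendsto_nhds_unique ((φ.continuous.tendsto z).comp hz) ?_⟩
  obtain ⟨I, hI, hIφ⟩ := happrox φ.toLinearMap.toSeminorm φ.continuous.norm
  refine tendsto_iff_dist_tendsto_zero.2 (squeeze_zero (fun _ => dist_nonneg) (fun k => ?_) hI)
  exact hIφ φ (fun u => by rw [LinearMap.toSeminorm_apply, Real.norm_eq_abs]; rfl) k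

theorem exists_forall_strongDual_integral_eq_of_seminorm_le {E : Type*} [AddCommGroup E]
    [Module ℝ E] [UniformSpace E] [IsUniformAddGroup E] [PolynormableSpace ℝ E]
    (hE : ∀ u : ℕ → E, CauchySeq u → ∃ l, Tendsto u atTop (𝓝 l))
    {d : ℕ} {G : (Fin d → ℝ) → E} (hGc : Continuous G) {r : ℝ} (hr : (d : ℝ) < r)
    (hG : ∀ p : Seminorm ℝ E, Continuous p → ∃ C, ∀ x, p (G x) ≤ C * (1 + ‖x‖) ^ (-r)) :
    ∃ z : E, ∀ φ : StrongDual ℝ E, Integrable (fun x => φ (G x)) ∧ φ z = ∫ x, φ (G x) := by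
  have hint : ∀ φ : StrongDual ℝ E, Integrable fun x => φ (G x) := fun φ => by
    obtain ⟨C, hC⟩ := hG φ.toLinearMap.toSeminorm φ.continuous.norm
    refine ((integrable_one_add_norm (by simpa using hr)).const_mul C).mono'
      (φ.continuous.comp hGc).aestronglyMeasurable (ae_of_all _ fun x => ?_)
    simpa [LinearMap.toSeminorm_apply] using hC x
  obtain ⟨z, hz⟩ := exists_forall_strongDual_apply_eq_of_approx hE
    (y := fun k => dyadicRiemannSum k G) (Λ := fun φ => ∫ x, φ (G x)) fun p hp => by
      obtain ⟨C, hC⟩ := hG p hp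
      exact ⟨_, tendsto_integral_seminorm_sub_dyadicStep hp hGc hr hC, fun φ hφ k =>
        abs_apply_dyadicRiemannSum_sub_integral_le φ hφ (hint φ) k
          (integrable_seminorm_sub_dyadicStep hp hGc hr hC k)⟩
  exact ⟨z, fun φ => ⟨hint φ, hz φ⟩⟩

theorem one_add_norm_le_two_mul_one_add_sum_sq {d : ℕ} (x : Fin d → ℝ) :
    1 + ‖x‖ ≤ 2 * (1 + ∑ i, x i ^ 2) := by
  have : ‖x‖ ≤ 1 + ∑ i, x i ^ 2 := (pi_norm_le_iff_of_nonneg (by positivity)).2 fun i => by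
    rw [Real.norm_eq_abs]
    nlinarith [sq_abs (x i), sq_nonneg (|x i| - 1),
      Finset.single_le_sum (fun j _ => sq_nonneg (x j)) (Finset.mem_univ i)]
  have : 0 ≤ ∑ i, x i ^ 2 := by positivity
  linarith

theorem le_mul_one_add_norm_rpow_neg_of_mul_le {d : ℕ} {a C s : ℝ} (x : Fin d → ℝ)
    (ha : 0 ≤ a) (hs : 0 ≤ s) (h : a * (1 + ∑ i, x i ^ 2) ^ s ≤ C) :
    a ≤ 2 ^ s * C * (1 + ‖x‖) ^ (-s) := by
  have hN : 0 < 1 + ‖x‖ := by positivity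
  rw [Real.rpow_neg hN.le, ← div_eq_mul_inv, le_div_iff₀ (Real.rpow_pos_of_pos hN s)]
  calc a * (1 + ‖x‖) ^ s ≤ a * (2 * (1 + ∑ i, x i ^ 2)) ^ s := by
        gcongr
        exact one_add_norm_le_two_mul_one_add_sum_sq x
    _ = 2 ^ s * (a * (1 + ∑ i, x i ^ 2) ^ s) := by
        rw [Real.mul_rpow zero_le_two (by positivity)]
        ring
    _ ≤ 2 ^ s * C := by gcongr

theorem exists_seminorm_hermiteFunD_smul_le {d : ℕ} {E : Type*} [AddCommGroup E] [Module ℝ E]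
    {f : (Fin d → ℝ) → E} {p : Seminorm ℝ E} {C s : ℝ} (hs : 0 ≤ s)
    (hf : ∀ x, p (f x) * (1 + ∑ i, x i ^ 2) ^ s ≤ C) (n : Fin d → ℕ) :
    ∃ C', ∀ x, p (hermiteFunD n x • f x) ≤ C' * (1 + ‖x‖) ^ (-s) := by
  obtain ⟨B, hB⟩ := exists_abs_hermiteFunD_le n
  refine ⟨B * (2 ^ s * C), fun x => ?_⟩
  rw [map_smul_eq_mul, Real.norm_eq_abs, mul_assoc]
  exact mul_le_mul (hB x) (le_mul_one_add_norm_rpow_neg_of_mul_le x (apply_nonneg p _) hs (hf x))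
    (apply_nonneg _ _) ((abs_nonneg _).trans (hB x))

theorem stmt13_general {E : Type*}
    [AddCommGroup E] [Module ℝ E] [UniformSpace E] [IsUniformAddGroup E]
    [ContinuousSMul ℝ E] [LocallyConvexSpace ℝ E]
    -- `E` is sequentially complete:
    (hEsc : ∀ x : ℕ → E, CauchySeq x → ∃ l, Tendsto x atTop (𝓝 l))
    (d : ℕ) (f : (Fin d → ℝ) → E)
    -- `f ∈ S(ℝ^d, E)`: `f` is smooth and all derivatives decay rapidly:
    (hsmooth : IsSmoothE f)
    (hdecay : ∀ (l : ℕ) (p : Seminorm ℝ E), Continuous p → ∃ C : ℝ,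
      ∀ L : List (Fin d), L.length ≤ l → ∀ x : Fin d → ℝ,
        p (pdIter L f x) * (1 + ∑ i, x i ^ 2) ^ ((l : ℝ) / 2) ≤ C)
    (n : Fin d → ℕ) :
    ∃ y : E,
      (∀ e' : E →L[ℝ] ℝ, Integrable (fun x => e' (f x) * hermiteFunD n x)) ∧
      (∀ e' : E →L[ℝ] ℝ, e' y = ∫ x : Fin d → ℝ, e' (f x) * hermiteFunD n x) := by
  have hfc : Continuous f := (hsmooth []).1
  obtain ⟨y, hy⟩ := exists_forall_strongDual_integral_eq_of_seminorm_le hEsc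
    (G := fun x => hermiteFunD n x • f x) ((continuous_hermiteFunD n).smul hfc)
    (r := ((2 * (d + 1) : ℕ) : ℝ) / 2)
    (by push_cast; linarith) fun p hp => by
      obtain ⟨C, hC⟩ := hdecay (2 * (d + 1)) p hp
      exact exists_seminorm_hermiteFunD_smul_le (by positivity) (hC [] (Nat.zero_le _)) n
  have hG : ∀ (e' : E →L[ℝ] ℝ) x, e' (hermiteFunD n x • f x) = e' (f x) * hermiteFunD n x :=
    fun e' x => by rw [map_smul, smul_eq_mul, mul_comm]
  exact ⟨y, fun e' => by simpa only [hG] using (hy e').1,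
    fun e' => by simpa only [hG] using (hy e').2⟩

/-- Let `E` be a sequentially complete locally convex Hausdorff space,
`f ∈ S(ℝ^d, E)` an `E`-valued Schwartz function and `hₙ` the `n`-th Hermite function,
`n ∈ ℕ₀^d`.  Then `f·hₙ` is Pettis-integrable on `ℝ^d`: there exists `y ∈ E` with
`⟨e', y⟩ = ∫ ⟨e', f(x)⟩ hₙ(x) dx` for every `e' ∈ E'`. -/
theorem stmt13 {E : Type*}
    [AddCommGroup E] [Module ℝ E] [UniformSpace E] [IsUniformAddGroup E]
    [ContinuousSMul ℝ E] [T2Space E] [LocallyConvexSpace ℝ E]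
    -- `E` is sequentially complete:
    (hEsc : ∀ x : ℕ → E, CauchySeq x → ∃ l, Tendsto x atTop (𝓝 l))
    (d : ℕ) (f : (Fin d → ℝ) → E)
    -- `f ∈ S(ℝ^d, E)`: `f` is smooth and all derivatives decay rapidly:
    (hsmooth : IsSmoothE f)
    (hdecay : ∀ (l : ℕ) (p : Seminorm ℝ E), Continuous p → ∃ C : ℝ,
      ∀ L : List (Fin d), L.length ≤ l → ∀ x : Fin d → ℝ,
        p (pdIter L f x) * (1 + ∑ i, x i ^ 2) ^ ((l : ℝ) / 2) ≤ C)
    (n : Fin d → ℕ) :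
    ∃ y : E,
      (∀ e' : E →L[ℝ] ℝ, Integrable (fun x => e' (f x) * hermiteFunD n x)) ∧
      (∀ e' : E →L[ℝ] ℝ, e' y = ∫ x : Fin d → ℝ, e' (f x) * hermiteFunD n x) :=
  stmt13_general hEsc d f hsmooth hdecay n
end

section
/- Let E be a locally convex Hausdorff space with the metric convex compactness property, and let 𝒯 = (tₙ)_{n∈ℕ₀} be a dense sequence in [a,b] with t₀ = a, t₁ = b, and pairwise distinct terms. Define the Schauder hat functions φₙ^𝒯 and the coefficient maps λ₀^E(f) = f(t₀), λ₁^E(f) = f(t₁), λ_{n+1}^E(f) = f(t_{n+1}) − Σ_{k=0}^{n} λ_k^E(f) φ_k^𝒯(t_{n+1}) for n ≥ 1. Then every f ∈ C([a,b], E) satisfies f = Σ_{n=0}^{∞} λₙ^E(f) φₙ^𝒯 with uniform convergence on [a,b]. -/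
open Filter Topology Pointwise

/-- The Schauder hat functions `φₙ^𝒯` for a sequence `𝒯 = (tₙ)` in `[a,b]` with `t₀ = a`,
`t₁ = b`: `φ₀` and `φ₁` are the two affine hat functions of the partition `(a,b)`, and for
`n ≥ 2`, `φₙ` is the piecewise linear hat function which is `1` at `tₙ`, `0` at the left and
right neighbours of `tₙ` among `t₀,…,t_{n-1}`, affine in between and `0` elsewhere. -/
noncomputable def schauderHat (t : ℕ → ℝ) (a b : ℝ) : ℕ → ℝ → ℝ
  | 0 => fun x => if a ≤ x ∧ x ≤ b then (b - x) / (b - a) else 0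
  | 1 => fun x => if a ≤ x ∧ x ≤ b then (x - a) / (b - a) else 0
  | n + 2 => fun x =>
      let tn := t (n + 2)
      let l := sSup {y : ℝ | (∃ j < n + 2, t j = y) ∧ y < tn}
      let r := sInf {y : ℝ | (∃ j < n + 2, t j = y) ∧ tn < y}
      if l ≤ x ∧ x ≤ tn then (x - l) / (tn - l)
      else if tn < x ∧ x ≤ r then (r - x) / (r - tn)
      else 0

/-- The coefficient maps `λₙᴱ` of the Faber–Schauder expansion:
`λ₀ᴱ(f) = f(t₀)`, `λ₁ᴱ(f) = f(t₁)` and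
`λ_{n+1}ᴱ(f) = f(t_{n+1}) − Σ_{k≤n} λ_kᴱ(f) φ_k^𝒯(t_{n+1})`. -/
noncomputable def schauderCoef {E : Type*} [AddCommGroup E] [Module ℝ E]
    (t : ℕ → ℝ) (a b : ℝ) (f : ℝ → E) : ℕ → E
  | 0 => f (t 0)
  | 1 => f (t 1)
  | n + 2 => f (t (n + 2)) - ∑ k ∈ (Finset.range (n + 2)).attach,
      schauderHat t a b k.1 (t (n + 2)) • schauderCoef t a b f k.1
  decreasing_by exact Finset.mem_range.mp k.2

/-- `E` has the *metric convex compactness property*: the closed absolutely convex hull of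
every metrisable compact subset of `E` is compact. -/
def MetricCCP (E : Type*) [AddCommGroup E] [Module ℝ E] [UniformSpace E] : Prop :=
  ∀ K : Set E, IsCompact K → TopologicalSpace.MetrizableSpace K →
    IsCompact (closure (convexHull ℝ (balancedHull ℝ K)))

/-!
The `N`-th partial sum `S_N f` is the piecewise linear interpolant of `f` at the nodes
`t 0, …, t (N-1)`. It agrees with `f` at these nodes, because every later hat vanishes at the
earlier nodes and the coefficient of `φ_n` is precisely the defect `f (t n) - S_n f (t n)`; and
it is affine between adjacent nodes, because the breakpoints of each `φ_n`, `n < N`, are among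
them. Hence `S_N f x` is a convex combination of `f p` and `f q` for the cell `[p, q] ∋ x`.
Density of the nodes makes all cells uniformly short for large `N`, so by uniform continuity of
`f` both `f p - f x` and `f q - f x`, and therefore `S_N f x - f x`, lie in any prescribed convex
neighbourhood of `0`.
-/

open Set

section Interpolation

variable {E : Type*} [AddCommGroup E] [Module ℝ E]

def IsAffineOn (g : ℝ → E) (s : Set ℝ) : Prop := ∃ A B : E, ∀ x ∈ s, g x = A + x • B

theorem IsAffineOn.smul_const {g : ℝ → ℝ} {s : Set ℝ} (hg : IsAffineOn g s) (c : E) :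
    IsAffineOn (fun x ↦ g x • c) s := by
  obtain ⟨α, β, hαβ⟩ := hg
  exact ⟨α • c, β • c, fun x hx ↦ by
    simp only [hαβ x hx, add_smul, smul_eq_mul, mul_smul]⟩

theorem IsAffineOn.sum {ι : Type*} (u : Finset ι) {g : ι → ℝ → E} {s : Set ℝ}
    (hg : ∀ i ∈ u, IsAffineOn (g i) s) : IsAffineOn (fun x ↦ ∑ i ∈ u, g i x) s := by
  choose! A B hAB using hg
  refine ⟨∑ i ∈ u, A i, ∑ i ∈ u, B i, fun x hx ↦ ?_⟩
  rw [Finset.smul_sum, ← Finset.sum_add_distrib]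
  exact Finset.sum_congr rfl fun i hi ↦ hAB i hi x hx

theorem IsAffineOn.mem_segment {g : ℝ → E} {p q x : ℝ} (hg : IsAffineOn g (Icc p q))
    (hx : x ∈ Icc p q) : g x ∈ segment ℝ (g p) (g q) := by
  obtain ⟨A, B, hAB⟩ := hg
  have hpq : p ≤ q := hx.1.trans hx.2
  have hF : ∀ y ∈ Icc p q, g y = AffineMap.lineMap (k := ℝ) A (A + B) y := fun y hy ↦ by
    rw [hAB y hy, AffineMap.lineMap_apply_module', add_sub_cancel_left, add_comm]
  rw [hF x hx, hF p (left_mem_Icc.2 hpq), hF q (right_mem_Icc.2 hpq), ← image_segment]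
  exact mem_image_of_mem _ (by rwa [segment_eq_Icc hpq])

end Interpolation

def AreAdjacentIn (s : Set ℝ) (p q : ℝ) : Prop := p ∈ s ∧ q ∈ s ∧ ∀ y ∈ s, y ≤ p ∨ q ≤ y

theorem Set.Finite.exists_areAdjacentIn {s : Set ℝ} (hs : s.Finite) {x : ℝ}
    (hleft : ∃ y ∈ s, y ≤ x) (hright : ∃ y ∈ s, x ≤ y) :
    ∃ p q, AreAdjacentIn s p q ∧ x ∈ Icc p q := by
  have hfin (P : ℝ → Prop) : {y ∈ s | P y}.Finite := hs.subset (sep_subset _ _)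
  have hp := Nonempty.csSup_mem hleft (hfin (· ≤ x))
  have hq := Nonempty.csInf_mem hright (hfin (x ≤ ·))
  refine ⟨_, _, ⟨hp.1, hq.1, fun y hy ↦ ?_⟩, hp.2, hq.2⟩
  rcases le_total y x with hyx | hxy
  · exact .inl (le_csSup (hfin _).bddAbove ⟨hy, hyx⟩)
  · exact .inr (csInf_le (hfin _).bddBelow ⟨hy, hxy⟩)

theorem AreAdjacentIn.sub_lt {s : Set ℝ} {p q y δ : ℝ} (hpq : AreAdjacentIn s p q) (hy : y ∈ s)
    (hdist : dist ((p + q) / 2) y < δ) : q - p < 2 * δ := by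
  rw [Real.dist_eq, abs_lt] at hdist
  rcases hpq.2.2 y hy with hyp | hqy <;> linarith

theorem IsCompact.exists_pos_forall_sub_mem {α G : Type*} [PseudoMetricSpace α] [AddGroup G]
    [UniformSpace G] [IsUniformAddGroup G] {f : α → G} {s : Set α} (hs : IsCompact s)
    (hf : ContinuousOn f s) {W : Set G} (hW : W ∈ 𝓝 0) :
    ∃ δ > 0, ∀ x ∈ s, ∀ y ∈ s, dist x y < δ → f y - f x ∈ W :=
  (Metric.uniformity_basis_dist.uniformContinuousOn_iff
    (𝓝 (0 : G)).basis_sets.uniformity_of_nhds_zero).1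
    (hs.uniformContinuousOn_of_continuous hf) W hW

theorem IsCompact.exists_forall_exists_dist_lt {α : Type*} [PseudoMetricSpace α] {K : Set α}
    {t : ℕ → α} (hK : IsCompact K) (hKt : K ⊆ closure (range t)) {δ : ℝ} (hδ : 0 < δ) :
    ∃ N, ∀ x ∈ K, ∃ j < N, dist x (t j) < δ := by
  have hcover : K ⊆ ⋃ j, Metric.ball (t j) δ := fun x hx ↦ by
    obtain ⟨j, hj⟩ := Metric.mem_closure_range_iff.1 (hKt hx) δ hδ
    exact mem_iUnion.2 ⟨j, hj⟩
  obtain ⟨u, hu⟩ := hK.elim_finite_subcover _ (fun _ ↦ Metric.isOpen_ball) hcover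
  obtain ⟨N, hN⟩ := u.exists_nat_subset_range
  refine ⟨N, fun x hx ↦ ?_⟩
  obtain ⟨j, hj, hxj⟩ := mem_iUnion₂.1 (hu hx)
  exact ⟨j, Finset.mem_range.1 (hN hj), hxj⟩

section Schauder

structure IsSchauderNodes (t : ℕ → ℝ) (a b : ℝ) : Prop where
  zero : t 0 = a
  one : t 1 = b
  mem : ∀ n, t n ∈ Icc a b
  injective : Function.Injective t

variable {t : ℕ → ℝ} {a b : ℝ}

theorem IsSchauderNodes.left_lt_right (h : IsSchauderNodes t a b) : a < b :=
  (h.one ▸ (h.mem 1).1).lt_of_ne fun hab ↦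
    zero_ne_one (h.injective (h.zero.trans (hab.trans h.one.symm)))

theorem IsSchauderNodes.mem_Ioo (h : IsSchauderNodes t a b) {n : ℕ} (hn : 2 ≤ n) :
    t n ∈ Ioo a b := by
  refine ⟨(h.mem n).1.lt_of_ne fun han ↦ ?_, (h.mem n).2.lt_of_ne fun hnb ↦ ?_⟩
  · have := h.injective (h.zero.trans han); omega
  · have := h.injective (hnb.trans h.one.symm); omega

noncomputable def leftNeighbor (t : ℕ → ℝ) (n : ℕ) : ℝ := sSup {y ∈ t '' Iio n | y < t n}

noncomputable def rightNeighbor (t : ℕ → ℝ) (n : ℕ) : ℝ := sInf {y ∈ t '' Iio n | t n < y}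

theorem schauderHat_add_two (n : ℕ) (x : ℝ) :
    schauderHat t a b (n + 2) x =
      if leftNeighbor t (n + 2) ≤ x ∧ x ≤ t (n + 2) then
        (x - leftNeighbor t (n + 2)) / (t (n + 2) - leftNeighbor t (n + 2))
      else if t (n + 2) < x ∧ x ≤ rightNeighbor t (n + 2) then
        (rightNeighbor t (n + 2) - x) / (rightNeighbor t (n + 2) - t (n + 2))
      else 0 := rfl

theorem finite_sep_image_Iio (t : ℕ → ℝ) (n : ℕ) (p : ℝ → Prop) :
    {y ∈ t '' Iio n | p y}.Finite :=
  ((finite_Iio n).image t).subset (sep_subset _ _)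

theorem IsSchauderNodes.leftNeighbor_mem (h : IsSchauderNodes t a b) {n : ℕ} (hn : 2 ≤ n) :
    leftNeighbor t n ∈ t '' Iio n ∧ leftNeighbor t n < t n :=
  Nonempty.csSup_mem (s := {y ∈ t '' Iio n | y < t n})
    ⟨a, ⟨0, by simp; omega, h.zero⟩, (h.mem_Ioo hn).1⟩ (finite_sep_image_Iio t n _)

theorem IsSchauderNodes.rightNeighbor_mem (h : IsSchauderNodes t a b) {n : ℕ} (hn : 2 ≤ n) :
    rightNeighbor t n ∈ t '' Iio n ∧ t n < rightNeighbor t n :=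
  Nonempty.csInf_mem (s := {y ∈ t '' Iio n | t n < y})
    ⟨b, ⟨1, by simp; omega, h.one⟩, (h.mem_Ioo hn).2⟩ (finite_sep_image_Iio t n _)

theorem IsSchauderNodes.le_leftNeighbor_or_rightNeighbor_le (h : IsSchauderNodes t a b)
    {n j : ℕ} (hj : j < n) :
    t j ≤ leftNeighbor t n ∨ rightNeighbor t n ≤ t j := by
  rcases lt_trichotomy (t j) (t n) with hlt | heq | hgt
  · exact .inl (le_csSup (finite_sep_image_Iio t n _).bddAbove ⟨mem_image_of_mem t hj, hlt⟩)
  · exact absurd (h.injective heq) hj.ne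
  · exact .inr (csInf_le (finite_sep_image_Iio t n _).bddBelow ⟨mem_image_of_mem t hj, hgt⟩)

theorem schauderHat_add_two_of_mem_Icc_left {n : ℕ} {x : ℝ}
    (hx : x ∈ Icc (leftNeighbor t (n + 2)) (t (n + 2))) :
    schauderHat t a b (n + 2) x =
      (x - leftNeighbor t (n + 2)) / (t (n + 2) - leftNeighbor t (n + 2)) := by
  rw [schauderHat_add_two, if_pos ⟨hx.1, hx.2⟩]

theorem IsSchauderNodes.schauderHat_add_two_of_mem_Icc_right (h : IsSchauderNodes t a b)
    {n : ℕ} {x : ℝ} (hx : x ∈ Icc (t (n + 2)) (rightNeighbor t (n + 2))) :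
    schauderHat t a b (n + 2) x =
      (rightNeighbor t (n + 2) - x) / (rightNeighbor t (n + 2) - t (n + 2)) := by
  have hl := (h.leftNeighbor_mem (n := n + 2) (by omega)).2
  have hr := (h.rightNeighbor_mem (n := n + 2) (by omega)).2
  rcases hx.1.eq_or_lt with rfl | hTx
  · rw [schauderHat_add_two, if_pos ⟨hl.le, le_rfl⟩, div_self (sub_pos.2 hl).ne',
      div_self (sub_pos.2 hr).ne']
  · rw [schauderHat_add_two, if_neg fun h ↦ h.2.not_gt hTx, if_pos ⟨hTx, hx.2⟩]

theorem IsSchauderNodes.schauderHat_add_two_eq_zero (h : IsSchauderNodes t a b) {n : ℕ} {x : ℝ}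
    (hx : x ≤ leftNeighbor t (n + 2) ∨ rightNeighbor t (n + 2) ≤ x) :
    schauderHat t a b (n + 2) x = 0 := by
  have hl := (h.leftNeighbor_mem (n := n + 2) (by omega)).2
  have hr := (h.rightNeighbor_mem (n := n + 2) (by omega)).2
  rw [schauderHat_add_two]
  split_ifs with h₁ h₂
  · rw [le_antisymm (hx.resolve_right fun h ↦ (h.trans h₁.2).not_gt hr) h₁.1, sub_self, zero_div]
  · rw [le_antisymm h₂.2 (hx.resolve_left fun h ↦ (h.trans_lt hl).not_gt h₂.1), sub_self,
      zero_div]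
  · rfl

theorem IsSchauderNodes.schauderHat_self (h : IsSchauderNodes t a b) :
    ∀ n, schauderHat t a b n (t n) = 1
  | 0 => by simp [schauderHat, h.zero, h.left_lt_right.le, (sub_pos.2 h.left_lt_right).ne']
  | 1 => by simp [schauderHat, h.one, h.left_lt_right.le, (sub_pos.2 h.left_lt_right).ne']
  | n + 2 => by
    have hl := (h.leftNeighbor_mem (n := n + 2) (by omega)).2
    rw [schauderHat_add_two_of_mem_Icc_left ⟨hl.le, le_rfl⟩, div_self (sub_pos.2 hl).ne']

theorem IsSchauderNodes.schauderHat_zero_one (h : IsSchauderNodes t a b) :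
    schauderHat t a b 0 (t 1) = 0 := by
  simp [schauderHat, h.one, h.left_lt_right.le]

theorem IsSchauderNodes.schauderHat_of_lt (h : IsSchauderNodes t a b) {j : ℕ} :
    ∀ {n}, j < n → schauderHat t a b n (t j) = 0
  | 1, hj => by
    obtain rfl : j = 0 := by omega
    simp [schauderHat, h.zero, h.left_lt_right.le]
  | n + 2, hj => h.schauderHat_add_two_eq_zero (h.le_leftNeighbor_or_rightNeighbor_le hj)

theorem IsSchauderNodes.Icc_subset_of_areAdjacentIn
    (h : IsSchauderNodes t a b) {N : ℕ} {p q : ℝ} (hpq : AreAdjacentIn (t '' Iio N) p q) :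
    Icc p q ⊆ Icc a b := by
  obtain ⟨⟨i, -, rfl⟩, ⟨j, -, rfl⟩, -⟩ := hpq
  exact Icc_subset_Icc (h.mem i).1 (h.mem j).2

theorem IsSchauderNodes.exists_areAdjacentIn_sub_lt
    (h : IsSchauderNodes t a b) {N : ℕ} (hN : 2 ≤ N) {δ : ℝ}
    (hnet : ∀ y ∈ Icc a b, ∃ j < N, dist y (t j) < δ) {x : ℝ} (hx : x ∈ Icc a b) :
    ∃ p q, AreAdjacentIn (t '' Iio N) p q ∧ x ∈ Icc p q ∧ q - p < 2 * δ := by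
  obtain ⟨p, q, hpq, hxpq⟩ := ((finite_Iio N).image t).exists_areAdjacentIn
    ⟨t 0, mem_image_of_mem t (show 0 < N by omega), h.zero ▸ hx.1⟩
    ⟨t 1, mem_image_of_mem t (show 1 < N by omega), h.one ▸ hx.2⟩
  have hmid : (p + q) / 2 ∈ Icc a b :=
    h.Icc_subset_of_areAdjacentIn hpq ⟨by linarith [hxpq.1, hxpq.2], by linarith [hxpq.1, hxpq.2]⟩
  obtain ⟨j, hj, hdist⟩ := hnet _ hmid
  exact ⟨p, q, hpq, hxpq, hpq.sub_lt (mem_image_of_mem t hj) hdist⟩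

theorem IsSchauderNodes.isAffineOn_schauderHat (h : IsSchauderNodes t a b)
    {N n : ℕ} {p q : ℝ} (hn : n < N) (hpq : AreAdjacentIn (t '' Iio N) p q) :
    IsAffineOn (schauderHat t a b n) (Icc p q) := by
  have hab := h.Icc_subset_of_areAdjacentIn hpq
  have hnode {m : ℕ} (hm : m ≤ N) : t '' Iio m ⊆ t '' Iio N := image_mono (Iio_subset_Iio hm)
  match n with
  | 0 => exact ⟨b / (b - a), -(b - a)⁻¹, fun x hx ↦ by
      simp only [schauderHat]
      rw [if_pos ⟨(hab hx).1, (hab hx).2⟩, smul_eq_mul]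
      ring⟩
  | 1 => exact ⟨-a / (b - a), (b - a)⁻¹, fun x hx ↦ by
      simp only [schauderHat]
      rw [if_pos ⟨(hab hx).1, (hab hx).2⟩, smul_eq_mul]
      ring⟩
  | n + 2 =>
    obtain ⟨hl, hlT⟩ := h.leftNeighbor_mem (n := n + 2) (by omega)
    obtain ⟨hr, hTr⟩ := h.rightNeighbor_mem (n := n + 2) (by omega)
    set l := leftNeighbor t (n + 2)
    set r := rightNeighbor t (n + 2)
    set T := t (n + 2)
    -- `l < T < r` are nodes, so the cell `[p, q]` lies in one of `(-∞, l]`, `[l, T]`, `[T, r]`,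
    -- `[r, ∞)`, on each of which the hat is given by a single affine formula.
    rcases hpq.2.2 l (hnode hn.le hl) with hlp | hql
    · rcases hpq.2.2 T ⟨n + 2, hn, rfl⟩ with hTp | hqT
      · rcases hpq.2.2 r (hnode hn.le hr) with hrp | hqr
        · exact ⟨0, 0, fun x hx ↦ by
            rw [h.schauderHat_add_two_eq_zero (.inr (hrp.trans hx.1)), smul_zero, add_zero]⟩
        · exact ⟨r / (r - T), -(r - T)⁻¹, fun x hx ↦ by
            rw [h.schauderHat_add_two_of_mem_Icc_right ⟨hTp.trans hx.1, hx.2.trans hqr⟩,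
              smul_eq_mul]
            ring⟩
      · exact ⟨-l / (T - l), (T - l)⁻¹, fun x hx ↦ by
          rw [schauderHat_add_two_of_mem_Icc_left ⟨hlp.trans hx.1, hx.2.trans hqT⟩, smul_eq_mul]
          ring⟩
    · exact ⟨0, 0, fun x hx ↦ by
        rw [h.schauderHat_add_two_eq_zero (.inl (hx.2.trans hql)), smul_zero, add_zero]⟩

variable {E : Type*} [AddCommGroup E] [Module ℝ E] {f : ℝ → E}

noncomputable def schauderPartialSum (t : ℕ → ℝ) (a b : ℝ) (f : ℝ → E) (N : ℕ) (x : ℝ) : E :=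
  ∑ n ∈ Finset.range N, schauderHat t a b n x • schauderCoef t a b f n

theorem schauderPartialSum_succ (N : ℕ) (x : ℝ) :
    schauderPartialSum t a b f (N + 1) x =
      schauderPartialSum t a b f N x + schauderHat t a b N x • schauderCoef t a b f N :=
  Finset.sum_range_succ _ _

theorem schauderCoef_add_two (n : ℕ) :
    schauderCoef t a b f (n + 2) =
      f (t (n + 2)) - schauderPartialSum t a b f (n + 2) (t (n + 2)) := by
  rw [schauderCoef, Finset.sum_attach (Finset.range (n + 2))
    (fun k ↦ schauderHat t a b k (t (n + 2)) • schauderCoef t a b f k)]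
  rfl

theorem IsSchauderNodes.schauderCoef_eq (h : IsSchauderNodes t a b) :
    ∀ n, schauderCoef t a b f n = f (t n) - schauderPartialSum t a b f n (t n)
  | 0 => by simp [schauderCoef, schauderPartialSum]
  | 1 => by simp [schauderCoef, schauderPartialSum, h.schauderHat_zero_one]
  | n + 2 => schauderCoef_add_two n

theorem IsSchauderNodes.schauderPartialSum_apply_node (h : IsSchauderNodes t a b) {j N : ℕ}
    (hj : j < N) :
    schauderPartialSum t a b f N (t j) = f (t j) := by
  induction N, hj using Nat.le_induction with
  | base =>
    rw [schauderPartialSum_succ, h.schauderHat_self, one_smul, h.schauderCoef_eq,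
      add_sub_cancel]
  | succ N hjN ih => rw [schauderPartialSum_succ, h.schauderHat_of_lt hjN, zero_smul, add_zero, ih]

theorem IsSchauderNodes.schauderPartialSum_mem_segment (h : IsSchauderNodes t a b) {N : ℕ}
    {p q x : ℝ} (hpq : AreAdjacentIn (t '' Iio N) p q) (hx : x ∈ Icc p q) :
    schauderPartialSum t a b f N x ∈ segment ℝ (f p) (f q) := by
  have hseg := (IsAffineOn.sum _ fun n hn ↦
    (h.isAffineOn_schauderHat (Finset.mem_range.1 hn) hpq).smul_const
      (schauderCoef t a b f n)).mem_segment hx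
  obtain ⟨⟨i, hi, rfl⟩, ⟨j, hj, rfl⟩, -⟩ := hpq
  rwa [← schauderPartialSum, ← schauderPartialSum, ← schauderPartialSum,
    h.schauderPartialSum_apply_node hi, h.schauderPartialSum_apply_node hj] at hseg

end Schauder

theorem stmt18_general {E : Type*}
    [AddCommGroup E] [Module ℝ E] [UniformSpace E] [IsUniformAddGroup E]
    [LocallyConvexSpace ℝ E]
    (a b : ℝ)
    (t : ℕ → ℝ) (ht0 : t 0 = a) (ht1 : t 1 = b)
    (htmem : ∀ n, t n ∈ Set.Icc a b) (htinj : Function.Injective t)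
    (htdense : Set.Icc a b ⊆ closure (Set.range t))
    (f : ℝ → E) (hf : ContinuousOn f (Set.Icc a b)) :
    TendstoUniformlyOn
      (fun (k : ℕ) (x : ℝ) => ∑ n ∈ Finset.range k,
        schauderHat t a b n x • schauderCoef t a b f n)
      f atTop (Set.Icc a b) := by
  have h : IsSchauderNodes t a b := ⟨ht0, ht1, htmem, htinj⟩
  rw [(LocallyConvexSpace.convex_basis_zero ℝ E).uniformity_of_nhds_zero
    |>.tendstoUniformlyOn_iff_of_uniformity]
  rintro W ⟨hW, hWconv⟩
  obtain ⟨δ, hδ, hfδ⟩ := isCompact_Icc.exists_pos_forall_sub_mem hf hW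
  obtain ⟨N₀, hN₀⟩ := isCompact_Icc.exists_forall_exists_dist_lt htdense (half_pos hδ)
  filter_upwards [eventually_ge_atTop (max N₀ 2)] with N hN x hx
  obtain ⟨p, q, hpq, hxpq, hgap⟩ := h.exists_areAdjacentIn_sub_lt (le_of_max_le_right hN)
    (fun y hy ↦ (hN₀ y hy).imp fun j hj ↦ ⟨hj.1.trans_le (le_of_max_le_left hN), hj.2⟩) hx
  rw [mul_div_cancel₀ _ two_ne_zero] at hgap
  have hclose {y : ℝ} (hy : y ∈ Icc p q) : f y - f x ∈ W :=
    hfδ x hx y (h.Icc_subset_of_areAdjacentIn hpq hy)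
      ((Real.dist_le_of_mem_Icc hxpq hy).trans_lt hgap)
  have hsegW := hWconv.segment_subset (hclose (left_mem_Icc.2 (hxpq.1.trans hxpq.2)))
    (hclose (right_mem_Icc.2 (hxpq.1.trans hxpq.2)))
  refine hsegW ((mem_segment_translate ℝ (f x)).1 ?_)
  simpa only [add_sub_cancel, schauderPartialSum] using
    h.schauderPartialSum_mem_segment (f := f) hpq hxpq

/-- Let `E` be a locally convex Hausdorff space with the metric convex
compactness property and `𝒯 = (tₙ)` a dense sequence in `[a,b]` with `t₀ = a`, `t₁ = b` and
pairwise distinct terms.  Then every `f ∈ C([a,b], E)` satisfies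
`f = Σₙ λₙᴱ(f) φₙ^𝒯` with uniform convergence on `[a,b]`. -/
theorem stmt18 {E : Type*}
    [AddCommGroup E] [Module ℝ E] [UniformSpace E] [IsUniformAddGroup E]
    [ContinuousSMul ℝ E] [T2Space E] [LocallyConvexSpace ℝ E]
    (hccp : MetricCCP E)
    (a b : ℝ) (hab : a < b)
    (t : ℕ → ℝ) (ht0 : t 0 = a) (ht1 : t 1 = b)
    (htmem : ∀ n, t n ∈ Set.Icc a b) (htinj : Function.Injective t)
    (htdense : Set.Icc a b ⊆ closure (Set.range t))
    (f : ℝ → E) (hf : ContinuousOn f (Set.Icc a b)) :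
    TendstoUniformlyOn
      (fun (k : ℕ) (x : ℝ) => ∑ n ∈ Finset.range k,
        schauderHat t a b n x • schauderCoef t a b f n)
      f atTop (Set.Icc a b) :=
  stmt18_general a b t ht0 ht1 htmem htinj htdense f hf
end
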